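/- arXiv:1802.07010 — 5 statements merged into one kernel-verified Lean document; each statement's English description precedes it below -/
import Mathlib

section
/- For the survival function of (1/n) log U^n one has: lim_{n→∞} (1/n) log P((1/n) log U^n > x) = 0 for every x ∈ [0, 1−R], and lim_{n→∞} (1/n) log P((1/n) log U^n > x) = −∞ for every x ∈ (1−R, 1). -/
open MeasureTheory ProbabilityTheory Filter Set Topology
open scoped ENNReal

/-!
For `k < qⁿ`, independence gives `P(Uⁿ > k) = (1 - k/qⁿ)^Mₙ`, and the event
`(1/n) log Uⁿ > x` is `Uⁿ > ⌊q^{nx}⌋`. With `aₙ = ⌊q^{nx}⌋/qⁿ ≈ q^{n(x-1)}` the exponent is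
`Mₙ log(1 - aₙ) / (n log q)`, and since `log(1 - a) ≍ -a` for small `a` it is of order
`-Mₙ aₙ / n ≈ -q^{n(R+x-1)} / n`. This tends to `0` when `R + x ≤ 1`, where `Mₙ aₙ ≤ 1`,
and to `-∞` when `R + x > 1`.
-/

/-- `(1/n)·log_q` of a sequence of probabilities (or expectations), valued in the
extended reals so that `log 0 = ⊥`. -/
noncomputable def rateSeq (q : ℕ) (p : ℕ → ℝ≥0∞) (n : ℕ) : EReal :=
  ((((n : ℝ) * Real.log q)⁻¹ : ℝ) : EReal) * ENNReal.log (p n)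

section Probability

variable {Ω ι : Type*} [MeasurableSpace Ω] {μ : Measure Ω}

theorem measure_lt_of_uniform_Icc {X : Ω → ℕ} (hX : Measurable X) {N : ℕ} {p : ℝ≥0∞}
    (hval : ∀ ω, X ω ∈ Finset.Icc 1 N)
    (hunif : ∀ j ∈ Finset.Icc 1 N, μ {ω | X ω = j} = p) (k : ℕ) :
    μ {ω | k < X ω} = (N - k : ℕ) * p := by
  have hset : {ω | k < X ω} = X ⁻¹' ↑(Finset.Ioc k N) := by
    ext ω
    simp [(Finset.mem_Icc.1 (hval ω)).2]
  have hfiber : ∀ j ∈ Finset.Ioc k N, μ (X ⁻¹' {j}) = p := fun j hj =>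
    hunif j (by simp only [Finset.mem_Ioc, Finset.mem_Icc] at hj ⊢; omega)
  rw [hset, ← sum_measure_preimage_singleton _ fun j _ => hX (measurableSet_singleton j),
    Finset.sum_congr rfl hfiber, Finset.sum_const, Nat.card_Ioc, nsmul_eq_mul]

theorem ProbabilityTheory.iIndepFun.measure_lt_iInf [Fintype ι] [Nonempty ι]
    {X : ι → Ω → ℕ} (hX : iIndepFun X μ) (k : ℕ) :
    μ {ω | k < ⨅ i, X i ω} = ∏ i, μ {ω | k < X i ω} := by
  have hset : {ω | k < ⨅ i, X i ω} = ⋂ i, X i ⁻¹' Ioi k := by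
    ext ω
    simp only [mem_ofPred_eq, mem_iInter, mem_preimage, mem_Ioi, Nat.lt_iff_add_one_le]
    exact le_ciInf_iff'
  rw [hset, hX.meas_iInter fun i => ⟨Ioi k, MeasurableSpace.measurableSet_top, rfl⟩]
  rfl

theorem measure_lt_iInf_of_uniform_Icc [Fintype ι] [Nonempty ι] {X : ι → Ω → ℕ}
    (hX : iIndepFun X μ) (hmeas : ∀ i, Measurable (X i)) {N : ℕ} {p : ℝ≥0∞}
    (hval : ∀ i ω, X i ω ∈ Finset.Icc 1 N)
    (hunif : ∀ i, ∀ j ∈ Finset.Icc 1 N, μ {ω | X i ω = j} = p) (k : ℕ) :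
    μ {ω | k < ⨅ i, X i ω} = ((N - k : ℕ) * p) ^ Fintype.card ι := by
  simp_rw [hX.measure_lt_iInf, fun i => measure_lt_of_uniform_Icc (hmeas i) (hval i) (hunif i) k,
    Finset.prod_const, Finset.card_univ]

end Probability

theorem ENNReal.log_natCast_sub_mul_inv_pow {N k : ℕ} (hk : k < N) (m : ℕ) :
    ENNReal.log ((((N - k : ℕ) : ℝ≥0∞) * (N : ℝ≥0∞)⁻¹) ^ m)
      = ((m * Real.log (1 - k / N) : ℝ) : EReal) := by
  have hN : (0 : ℝ) < N := by exact_mod_cast (Nat.zero_le k).trans_lt hk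
  have hbase : ((N - k : ℕ) : ℝ≥0∞) * (N : ℝ≥0∞)⁻¹ = ENNReal.ofReal (1 - k / N) := by
    rw [one_sub_div hN.ne', ENNReal.ofReal_div_of_pos hN, ← Nat.cast_sub hk.le,
      ENNReal.ofReal_natCast, ENNReal.ofReal_natCast, div_eq_mul_inv]
  have hpos : (0 : ℝ) < 1 - k / N := by
    rw [sub_pos, div_lt_one hN]; exact_mod_cast hk
  rw [hbase, ENNReal.log_pow, ENNReal.log_ofReal_of_pos hpos, EReal.coe_mul, EReal.coe_natCast]

theorem lt_inv_mul_logb_iff_floor_lt {b x : ℝ} (hb : 1 < b) (hx : 0 ≤ x) {n : ℕ} (hn : 0 < n)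
    (u : ℕ) : x < (n : ℝ)⁻¹ * Real.logb b u ↔ ⌊b ^ (n * x)⌋₊ < u := by
  rcases u.eq_zero_or_pos with rfl | hu
  · simpa using hx
  have hn' : (0 : ℝ) < n := by exact_mod_cast hn
  rw [inv_mul_eq_div, lt_div_iff₀ hn', Real.lt_logb_iff_rpow_lt hb (by exact_mod_cast hu),
    mul_comm x, Nat.floor_lt (by positivity)]

theorem Real.abs_log_one_sub_le {a : ℝ} (h0 : 0 ≤ a) (h : a ≤ 1 / 2) :
    |Real.log (1 - a)| ≤ 2 * a := by
  have hpos : 0 < 1 - a := by linarith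
  have hlower : -(2 * a) ≤ Real.log (1 - a) := by
    have hinv : (1 - a)⁻¹ ≤ 1 + 2 * a := by
      rw [inv_le_iff_one_le_mul₀' hpos]; nlinarith
    linarith [Real.one_sub_inv_le_log_of_pos hpos]
  rw [abs_of_nonpos (Real.log_nonpos hpos.le (by linarith))]
  linarith

/-- The exponent `rateSeq` takes for the minimum of `⌊q^{nR}⌋` independent uniform variables
on `{1, …, qⁿ}` at level `x`, read off from `P(min > ⌊q^{nx}⌋) = (1 - ⌊q^{nx}⌋/qⁿ)^⌊q^{nR}⌋`. -/
noncomputable def survivalExponent (q R x : ℝ) (n : ℕ) : ℝ :=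
  ((n : ℝ) * Real.log q)⁻¹ *
    (⌊q ^ ((n : ℝ) * R)⌋₊ * Real.log (1 - ⌊q ^ ((n : ℝ) * x)⌋₊ / q ^ n))

section Exponent

variable {q R x : ℝ}

theorem rpow_natCast_mul_add_sub_one (hq : 0 < q) (n : ℕ) (R x : ℝ) :
    q ^ ((n : ℝ) * (R + x - 1)) = q ^ ((n : ℝ) * R) * q ^ ((n : ℝ) * x) / q ^ n := by
  rw [mul_sub, mul_add, mul_one, Real.rpow_sub hq, Real.rpow_add hq, Real.rpow_natCast]

theorem floor_rpow_mul_floor_rpow_div_pow_le (hq : 0 < q) (n : ℕ) :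
    (⌊q ^ ((n : ℝ) * R)⌋₊ : ℝ) * (⌊q ^ ((n : ℝ) * x)⌋₊ / q ^ n)
      ≤ q ^ ((n : ℝ) * (R + x - 1)) := by
  rw [rpow_natCast_mul_add_sub_one hq, mul_div_assoc]
  gcongr <;> exact Nat.floor_le (by positivity)

theorem rpow_div_four_le_floor_rpow_mul_floor_rpow_div_pow (hq : 1 ≤ q) (hR : 0 ≤ R)
    (hx : 0 ≤ x) (n : ℕ) :
    q ^ ((n : ℝ) * (R + x - 1)) / 4
      ≤ (⌊q ^ ((n : ℝ) * R)⌋₊ : ℝ) * (⌊q ^ ((n : ℝ) * x)⌋₊ / q ^ n) := by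
  have hR' := Nat.div_two_lt_floor (Real.one_le_rpow hq (by positivity : 0 ≤ (n : ℝ) * R))
  have hx' := Nat.div_two_lt_floor (Real.one_le_rpow hq (by positivity : 0 ≤ (n : ℝ) * x))
  calc q ^ ((n : ℝ) * (R + x - 1)) / 4
      = q ^ ((n : ℝ) * R) / 2 * (q ^ ((n : ℝ) * x) / 2 / q ^ n) := by
        rw [rpow_natCast_mul_add_sub_one (by linarith)]; ring
    _ ≤ _ := by gcongr

theorem floor_rpow_div_pow_le (hq : 0 < q) (n : ℕ) :
    (⌊q ^ ((n : ℝ) * x)⌋₊ : ℝ) / q ^ n ≤ q ^ ((n : ℝ) * (x - 1)) := by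
  simpa [Real.rpow_natCast] using floor_rpow_mul_floor_rpow_div_pow_le (R := 0) (x := x) hq n

theorem tendsto_survivalExponent_zero (hq : 1 < q) (hR : 0 < R) (hx : x ≤ 1 - R) :
    Tendsto (survivalExponent q R x) atTop (𝓝 0) := by
  set a : ℕ → ℝ := fun n => ⌊q ^ ((n : ℝ) * x)⌋₊ / q ^ n
  have hq0 : 0 < q := by linarith
  have ha_nonneg (n : ℕ) : 0 ≤ a n := by positivity
  have hMa (n : ℕ) : ⌊q ^ ((n : ℝ) * R)⌋₊ * a n ≤ 1 :=
    (floor_rpow_mul_floor_rpow_div_pow_le hq0 n).trans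
      (Real.rpow_le_one_of_one_le_of_nonpos hq.le (by nlinarith))
  have ha_small : ∀ᶠ n in atTop, a n ≤ 1 / 2 := by
    have hlim : Tendsto (fun n : ℕ => (q ^ (-R)) ^ n) atTop (𝓝 0) :=
      tendsto_pow_atTop_nhds_zero_of_lt_one (by positivity)
        (Real.rpow_lt_one_of_one_lt_of_neg hq (by linarith))
    filter_upwards [hlim.eventually (ge_mem_nhds (by norm_num : (0 : ℝ) < 1 / 2))] with n hn
    refine ((floor_rpow_div_pow_le hq0 n).trans ?_).trans hn
    rw [← Real.rpow_mul_natCast hq0.le, mul_comm]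
    exact Real.rpow_le_rpow_of_exponent_le hq.le (by nlinarith)
  have hc : Tendsto (fun n : ℕ => 2 * ((n : ℝ) * Real.log q)⁻¹) atTop (𝓝 0) := by
    simpa using ((tendsto_natCast_atTop_atTop.atTop_mul_const
      (Real.log_pos hq)).inv_tendsto_atTop.const_mul 2)
  refine squeeze_zero_norm' ?_ hc
  filter_upwards [ha_small] with n hn
  have hc0 : 0 ≤ ((n : ℝ) * Real.log q)⁻¹ :=
    inv_nonneg.2 (mul_nonneg n.cast_nonneg (Real.log_pos hq).le)
  calc ‖survivalExponent q R x n‖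
      = ((n : ℝ) * Real.log q)⁻¹ * (⌊q ^ ((n : ℝ) * R)⌋₊ * |Real.log (1 - a n)|) := by
        rw [survivalExponent, Real.norm_eq_abs, abs_mul, abs_mul, abs_of_nonneg hc0,
          Nat.abs_cast]
    _ ≤ ((n : ℝ) * Real.log q)⁻¹ * (⌊q ^ ((n : ℝ) * R)⌋₊ * (2 * a n)) := by
        gcongr; exact Real.abs_log_one_sub_le (ha_nonneg n) hn
    _ ≤ 2 * ((n : ℝ) * Real.log q)⁻¹ := by nlinarith [hMa n]

theorem tendsto_survivalExponent_atBot (hq : 1 < q) (hR : 0 ≤ R) (hx0 : 0 ≤ x)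
    (hx : 1 - R < x) (hx1 : x < 1) :
    Tendsto (survivalExponent q R x) atTop atBot := by
  have hq0 : 0 < q := by linarith
  have hlogq : 0 < Real.log q := Real.log_pos hq
  have hgrowth : Tendsto
      (fun n : ℕ => ((n : ℝ) * Real.log q)⁻¹ * (q ^ ((n : ℝ) * (R + x - 1)) / 4)) atTop atTop := by
    refine (((tendsto_exp_mul_div_rpow_atTop 1 (R + x - 1) (by linarith)).comp
      (tendsto_natCast_atTop_atTop.atTop_mul_const hlogq)).atTop_div_const
      (by norm_num : (0 : ℝ) < 4)).congr fun n => ?_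
    simp only [Function.comp_apply, Real.rpow_one, Real.rpow_def_of_pos hq0]
    ring_nf
  refine tendsto_atBot_mono' atTop ?_ (tendsto_neg_atTop_atBot.comp hgrowth)
  filter_upwards [eventually_gt_atTop 0] with n hn
  set a := (⌊q ^ ((n : ℝ) * x)⌋₊ : ℝ) / q ^ n
  have hexp : (n : ℝ) * (x - 1) < 0 := mul_neg_of_pos_of_neg (by exact_mod_cast hn) (by linarith)
  have ha1 : a < 1 :=
    (floor_rpow_div_pow_le hq0 n).trans_lt (Real.rpow_lt_one_of_one_lt_of_neg hq hexp)
  have hlog : Real.log (1 - a) ≤ -a := by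
    linarith [Real.log_le_sub_one_of_pos (by linarith : 0 < 1 - a)]
  have hc0 : 0 ≤ ((n : ℝ) * Real.log q)⁻¹ := inv_nonneg.2 (mul_nonneg n.cast_nonneg hlogq.le)
  calc survivalExponent q R x n
      ≤ ((n : ℝ) * Real.log q)⁻¹ * (⌊q ^ ((n : ℝ) * R)⌋₊ * -a) := by
        unfold survivalExponent; gcongr
    _ ≤ -(((n : ℝ) * Real.log q)⁻¹ * (q ^ ((n : ℝ) * (R + x - 1)) / 4)) := by
        rw [mul_neg, mul_neg, neg_le_neg_iff]
        gcongr
        exact rpow_div_four_le_floor_rpow_mul_floor_rpow_div_pow hq.le hR hx0 n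

theorem floor_natCast_rpow_lt_pow {q : ℕ} (hq : 1 < (q : ℝ)) {n : ℕ} (hn : 0 < n) (hx : x < 1) :
    ⌊(q : ℝ) ^ ((n : ℝ) * x)⌋₊ < q ^ n := by
  rw [Nat.floor_lt (by positivity), Nat.cast_pow, ← Real.rpow_natCast]
  exact Real.rpow_lt_rpow_of_exponent_lt hq (mul_lt_of_lt_one_right (by positivity) hx)

end Exponent

theorem grand_min_uniform_survival_exponent_general
    {Ω : Type*} [MeasurableSpace Ω] (μ : Measure Ω)
    (q : ℕ) (hq : 2 ≤ q) (R : ℝ) (hR : R ∈ Set.Ioo (0:ℝ) 1)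
    (M : ℕ → ℕ) (hM : ∀ n : ℕ, M n = ⌊(q : ℝ) ^ ((n : ℝ) * R)⌋₊)
    (Un : (n : ℕ) → Fin (M n) → Ω → ℕ)
    (hUnmeas : ∀ n i, Measurable (Un n i))
    (hUnval : ∀ n i ω, Un n i ω ∈ Finset.Icc 1 (q ^ n))
    (hUnunif : ∀ n i, ∀ k ∈ Finset.Icc 1 (q ^ n), μ {ω | Un n i ω = k} = ((q : ℝ≥0∞) ^ n)⁻¹)
    (hUnindep : ∀ n, iIndepFun (Un n) μ)
    (U : ℕ → Ω → ℕ) (hU : ∀ n ω, U n ω = ⨅ i, Un n i ω)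
    :
    (∀ x ∈ Set.Icc (0:ℝ) (1 - R),
      Filter.Tendsto
        (rateSeq q (fun n => μ {ω | x < (n : ℝ)⁻¹ * Real.logb q ((U n ω : ℝ))}))
        Filter.atTop (nhds (0 : EReal))) ∧
    (∀ x ∈ Set.Ioo (1 - R) (1:ℝ),
      Filter.Tendsto
        (rateSeq q (fun n => μ {ω | x < (n : ℝ)⁻¹ * Real.logb q ((U n ω : ℝ))}))
        Filter.atTop (nhds (⊥ : EReal))) := by
  have hq1 : (1 : ℝ) < q := by exact_mod_cast hq
  have hrate : ∀ x, 0 ≤ x → x < 1 →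
      (fun n => (survivalExponent q R x n : EReal)) =ᶠ[atTop]
        rateSeq q (fun n => μ {ω | x < (n : ℝ)⁻¹ * Real.logb q ((U n ω : ℝ))}) := by
    intro x hx0 hx1
    filter_upwards [eventually_gt_atTop 0] with n hn
    have : Nonempty (Fin (M n)) := ⟨⟨0, by
      rw [hM, Nat.floor_pos]; exact Real.one_le_rpow hq1.le (by positivity [hR.1.le])⟩⟩
    simp_rw [rateSeq, lt_inv_mul_logb_iff_floor_lt hq1 hx0 hn, hU,
      measure_lt_iInf_of_uniform_Icc (hUnindep n) (hUnmeas n) (hUnval n) (hUnunif n) _]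
    rw [← Nat.cast_pow, Fintype.card_fin,
      ENNReal.log_natCast_sub_mul_inv_pow (floor_natCast_rpow_lt_pow hq1 hn hx1),
      survivalExponent, ← hM, ← EReal.coe_mul]
    norm_cast
  refine ⟨fun x hx => ?_, fun x hx => ?_⟩
  · exact (EReal.tendsto_coe.2 (tendsto_survivalExponent_zero hq1 hR.1 hx.2)).congr'
      (hrate x hx.1 (by linarith [hR.1, hx.2]))
  · exact (EReal.tendsto_coe_nhds_bot_iff.2 (tendsto_survivalExponent_atBot hq1 hR.1.le
      (by linarith [hR.2, hx.1]) hx.1 hx.2)).congr' (hrate x (by linarith [hR.2, hx.1]) hx.2)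

/-- Survival-function exponents for `(1/n) log_q Uⁿ`:
the exponent is `0` on `[0, 1-R]` and `-∞` on `(1-R, 1)`. -/
theorem grand_min_uniform_survival_exponent
    {Ω : Type*} [MeasurableSpace Ω] (μ : Measure Ω) [IsProbabilityMeasure μ]
    (q : ℕ) (hq : 2 ≤ q) (R : ℝ) (hR : R ∈ Set.Ioo (0:ℝ) 1)
    (M : ℕ → ℕ) (hM : ∀ n : ℕ, M n = ⌊(q : ℝ) ^ ((n : ℝ) * R)⌋₊)
    (Un : (n : ℕ) → Fin (M n) → Ω → ℕ)
    (hUnmeas : ∀ n i, Measurable (Un n i))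
    (hUnval : ∀ n i ω, Un n i ω ∈ Finset.Icc 1 (q ^ n))
    (hUnunif : ∀ n i, ∀ k ∈ Finset.Icc 1 (q ^ n), μ {ω | Un n i ω = k} = ((q : ℝ≥0∞) ^ n)⁻¹)
    (hUnindep : ∀ n, iIndepFun (Un n) μ)
    (U : ℕ → Ω → ℕ) (hU : ∀ n ω, U n ω = ⨅ i, Un n i ω)
    :
    (∀ x ∈ Set.Icc (0:ℝ) (1 - R),
      Filter.Tendsto
        (rateSeq q (fun n => μ {ω | x < (n : ℝ)⁻¹ * Real.logb q ((U n ω : ℝ))}))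
        Filter.atTop (nhds (0 : EReal))) ∧
    (∀ x ∈ Set.Ioo (1 - R) (1:ℝ),
      Filter.Tendsto
        (rateSeq q (fun n => μ {ω | x < (n : ℝ)⁻¹ * Real.logb q ((U n ω : ℝ))}))
        Filter.atTop (nhds (⊥ : EReal))) :=
  grand_min_uniform_survival_exponent_general μ q hq R hR M hM Un hUnmeas hUnval hUnunif hUnindep U
    hU
end

section
/- The sequence {(1/n) log U^n} satisfies the large deviation principle with rate function I^U: for every x ∈ [0,1], lim_{ε↓0} liminf_{n→∞} (1/n) log P((1/n) log U^n ∈ (x−ε, x+ε)) = lim_{ε↓0} limsup_{n→∞} (1/n) log P((1/n) log U^n ∈ (x−ε, x+ε)) = −I^U(x), where I^U(x) = 1 − R − x for x ∈ [0, 1−R] and I^U(x) = +∞ for x ∈ (1−R, 1]. -/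
/-!
Write `Q = qⁿ` and `m = Mₙ ≈ q^{nR}`. By independence `P(Uⁿ > k) = (1 - k/Q)^m`, and the window
`(1/n) log_q Uⁿ ∈ (y, z)` is the event `q^{ny} < Uⁿ < q^{nz}`. A union bound gives it probability
at most `m q^{nz}/Q = q^{n(R+z-1)}`. For `y < w < z` with `0 < w < 1 - R` the window contains the
event `q^{ny} < Uⁿ ≤ q^{nw}`, of probability `(1 - q^{ny}/Q)^m - (1 - q^{nw}/Q)^m`; since
`m q^{nw}/Q = q^{n(R+w-1)} → 0`, this is at least a constant times `q^{n(R+w-1)}`. For `y > 1 - R`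
the probability is at most `(1 - q^{ny}/Q)^m ≤ exp(-q^{n(R+y-1)}/4)`, which decays faster than any
exponential. Shrinking the window around `x` gives the rate `1 - R - x` on `[0, 1 - R]` and `+∞`
beyond it.
-/

open MeasureTheory ProbabilityTheory Filter Set Topology
open scoped ENNReal

/-- The rate function `I^U` for guessing a non-transmitted code-word:
`I^U(x) = 1 - R - x` on `[0, 1-R]` and `+∞` beyond. -/
noncomputable def IU (R : ℝ) (x : ℝ) : EReal :=
  if x ≤ 1 - R then ((1 - R - x : ℝ) : EReal) else ⊤

lemma mul_sub_mul_pow_le_pow_sub_pow {s t : ℝ} (hs : 0 ≤ s) (hst : s ≤ t) (hs1 : s ≤ 1) (m : ℕ) :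
    m * (t - s) * s ^ m ≤ t ^ m - s ^ m := by
  have hbern := pow_add_mul_le_add_pow hs (by linarith : 0 ≤ 2 * s + (t - s)) m
  rw [add_sub_cancel] at hbern
  have hpow : s ^ m ≤ s ^ (m - 1) := pow_le_pow_of_le_one hs hs1 (Nat.sub_le m 1)
  calc m * (t - s) * s ^ m ≤ m * (t - s) * s ^ (m - 1) :=
        mul_le_mul_of_nonneg_left hpow (mul_nonneg m.cast_nonneg (by linarith))
    _ ≤ t ^ m - s ^ m := by linarith

lemma mul_mul_one_sub_mul_le_one_sub_pow_sub_one_sub_pow {a b : ℝ} (ha : 0 ≤ a) (hab : a ≤ b)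
    (hb : b ≤ 1) (m : ℕ) : m * (b - a) * (1 - m * b) ≤ (1 - a) ^ m - (1 - b) ^ m := by
  have hbern : 1 - m * b ≤ (1 - b) ^ m := by
    simpa [sub_eq_add_neg] using one_add_mul_le_pow (a := -b) (by linarith) m
  calc m * (b - a) * (1 - m * b) ≤ m * ((1 - a) - (1 - b)) * (1 - b) ^ m := by
        rw [sub_sub_sub_cancel_left]
        exact mul_le_mul_of_nonneg_left hbern (mul_nonneg m.cast_nonneg (by linarith))
    _ ≤ (1 - a) ^ m - (1 - b) ^ m :=
        mul_sub_mul_pow_le_pow_sub_pow (by linarith) (by linarith) (by linarith) m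

lemma div_eight_le_mul_sub_natFloor_mul_one_sub {A m Q a c : ℝ} (hQ : 0 < Q) (hmA : A / 2 ≤ m)
    (hmA' : m ≤ A) (hc : 4 ≤ c) (ha : 0 ≤ a) (hac : a ≤ c / 4) (hAc : A * c / Q ≤ 1 / 2) :
    A * c / Q / 8 ≤ m * ((⌊c⌋₊ - ⌊a⌋₊) / Q) * (1 - m * ⌊c⌋₊ / Q) := by
  have hA : 0 ≤ A := by linarith
  have hm : 0 ≤ m := by linarith
  have hcount : A * c / Q / 4 ≤ m * ((⌊c⌋₊ - ⌊a⌋₊) / Q) := by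
    have hgap : c / 2 ≤ (⌊c⌋₊ : ℝ) - ⌊a⌋₊ := by
      linarith [Nat.lt_floor_add_one c, Nat.floor_le ha]
    calc A * c / Q / 4 = A / 2 * (c / 2 / Q) := by ring
      _ ≤ _ := by gcongr
  have hfree : 1 / 2 ≤ 1 - m * ⌊c⌋₊ / Q := by
    have : m * ⌊c⌋₊ / Q ≤ A * c / Q := by
      gcongr
      exact Nat.floor_le (by linarith)
    linarith
  calc A * c / Q / 8 = A * c / Q / 4 * (1 / 2) := by ring
    _ ≤ _ := mul_le_mul hcount hfree (by norm_num) (hcount.trans' (by positivity))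

lemma natCast_sub_div_self {Q k : ℕ} (hk : k ≤ Q) (hQ : 0 < Q) :
    ((Q - k : ℕ) : ℝ) / Q = 1 - k / Q := by
  rw [Nat.cast_sub hk, sub_div, div_self (by positivity)]

lemma Nat.lt_ciInf_iff {ι : Type*} [Nonempty ι] {f : ι → ℕ} {k : ℕ} :
    k < ⨅ i, f i ↔ ∀ i, k < f i := by
  simp only [Nat.lt_iff_add_one_le]
  exact le_ciInf_iff'

structure IsIIDUniform {Ω ι : Type*} [MeasurableSpace Ω] (μ : Measure Ω) (Q : ℕ)
    (X : ι → Ω → ℕ) : Prop where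
  measurable : ∀ i, Measurable (X i)
  mem_Icc : ∀ i ω, X i ω ∈ Finset.Icc 1 Q
  measure_eq : ∀ i, ∀ k ∈ Finset.Icc 1 Q, μ {ω | X i ω = k} = (Q : ℝ≥0∞)⁻¹
  iIndepFun : iIndepFun X μ

namespace IsIIDUniform

variable {Ω ι : Type*} [MeasurableSpace Ω] {μ : Measure Ω} {Q : ℕ} {X : ι → Ω → ℕ}

lemma measureReal_lt (h : IsIIDUniform μ Q X) (i : ι) (k : ℕ) :
    μ.real {ω | k < X i ω} = ((Q - k : ℕ) : ℝ) / Q := by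
  have hset : {ω | k < X i ω} = X i ⁻¹' ↑(Finset.Ioc k Q) := by
    ext ω
    have := Finset.mem_Icc.1 (h.mem_Icc i ω)
    simp only [mem_ofPred_eq, mem_preimage, Finset.coe_Ioc, mem_Ioc]
    omega
  have hsum := sum_measure_preimage_singleton (μ := μ) (Finset.Ioc k Q)
    (fun j _ => h.measurable i (measurableSet_singleton j))
  have hj : ∀ j ∈ Finset.Ioc k Q, μ (X i ⁻¹' {j}) = (Q : ℝ≥0∞)⁻¹ := fun j hj =>
    h.measure_eq i j (Finset.mem_Icc.2 (by rw [Finset.mem_Ioc] at hj; omega))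
  rw [hset, measureReal_def, ← hsum, Finset.sum_congr rfl hj, Finset.sum_const, Nat.card_Ioc,
    nsmul_eq_mul, ENNReal.toReal_mul, ENNReal.toReal_inv, ENNReal.toReal_natCast,
    ENNReal.toReal_natCast, div_eq_mul_inv]

lemma measureReal_le_le [IsProbabilityMeasure μ] (h : IsIIDUniform μ Q X) (hQ : 0 < Q)
    (i : ι) (l : ℕ) : μ.real {ω | X i ω ≤ l} ≤ l / Q := by
  have hcompl : {ω | X i ω ≤ l} = {ω | l < X i ω}ᶜ := by ext; simp
  rw [hcompl, probReal_compl_eq_one_sub (measurableSet_lt measurable_const (h.measurable i)),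
    h.measureReal_lt, one_sub_div (by positivity), div_le_div_iff_of_pos_right (by positivity)]
  have : (Q : ℝ) ≤ ((Q - l : ℕ) : ℝ) + l := by exact_mod_cast (le_tsub_add : Q ≤ Q - l + l)
  linarith

lemma one_le_iInf [Nonempty ι] (h : IsIIDUniform μ Q X) (ω : Ω) : 1 ≤ ⨅ i, X i ω :=
  le_ciInf fun i => (Finset.mem_Icc.1 (h.mem_Icc i ω)).1

variable [Fintype ι] [Nonempty ι]

lemma measureReal_lt_iInf (h : IsIIDUniform μ Q X) (k : ℕ) :
    μ.real {ω | k < ⨅ i, X i ω} = (((Q - k : ℕ) : ℝ) / Q) ^ Fintype.card ι := by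
  have hset : {ω | k < ⨅ i, X i ω} = ⋂ i, X i ⁻¹' Ioi k := by
    ext ω
    simp [Nat.lt_ciInf_iff]
  rw [hset, measureReal_def, h.iIndepFun.meas_iInter fun i => ⟨Ioi k, measurableSet_Ioi, rfl⟩,
    ENNReal.toReal_prod]
  simp only [← measureReal_def]
  exact (Finset.prod_congr rfl fun i _ => h.measureReal_lt i k).trans
    (by rw [Finset.prod_const, Finset.card_univ])

lemma measureReal_iInf_le_le [IsProbabilityMeasure μ] (h : IsIIDUniform μ Q X) (hQ : 0 < Q)
    (l : ℕ) : μ.real {ω | ⨅ i, X i ω ≤ l} ≤ Fintype.card ι * l / Q := by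
  have hset : {ω | ⨅ i, X i ω ≤ l} = ⋃ i, {ω | X i ω ≤ l} := by
    ext ω
    simp only [mem_ofPred_eq, mem_iUnion, ← not_lt, Nat.lt_ciInf_iff, not_forall]
  rw [hset]
  calc _ ≤ ∑ i, μ.real {ω | X i ω ≤ l} := measureReal_iUnion_fintype_le _
    _ ≤ ∑ _i : ι, (l : ℝ) / Q := Finset.sum_le_sum fun i _ => h.measureReal_le_le hQ i l
    _ = _ := by simp [mul_div_assoc]

lemma le_measureReal_lt_iInf_le [IsProbabilityMeasure μ] (h : IsIIDUniform μ Q X)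
    (hQ : 0 < Q) {k l : ℕ} (hkl : k ≤ l) (hlQ : l ≤ Q) :
    Fintype.card ι * ((l - k) / Q) * (1 - Fintype.card ι * l / Q) ≤
      μ.real {ω | k < ⨅ i, X i ω ∧ ⨅ i, X i ω ≤ l} := by
  have hset : {ω | k < ⨅ i, X i ω ∧ ⨅ i, X i ω ≤ l} =
      {ω | k < ⨅ i, X i ω} \ {ω | l < ⨅ i, X i ω} := by
    ext ω
    simp [not_lt]
  have hsub : {ω | l < ⨅ i, X i ω} ⊆ {ω | k < ⨅ i, X i ω} := fun ω hω =>
    lt_of_le_of_lt hkl hω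
  have hmeas : MeasurableSet {ω | l < ⨅ i, X i ω} :=
    measurableSet_lt measurable_const (Measurable.iInf fun i => h.measurable i)
  rw [hset, measureReal_sdiff hsub hmeas, h.measureReal_lt_iInf, h.measureReal_lt_iInf,
    natCast_sub_div_self (hkl.trans hlQ) hQ, natCast_sub_div_self hlQ hQ]
  convert mul_mul_one_sub_mul_le_one_sub_pow_sub_one_sub_pow
    (div_nonneg k.cast_nonneg Q.cast_nonneg)
    (div_le_div_of_nonneg_right (Nat.cast_le.2 hkl) Q.cast_nonneg)
    (div_le_one_of_le₀ (Nat.cast_le.2 hlQ) Q.cast_nonneg) (Fintype.card ι) using 2 <;> ring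

lemma measureReal_lt_iInf_le_exp (h : IsIIDUniform μ Q X) (hQ : 0 < Q) {k : ℕ} (hk : k ≤ Q) :
    μ.real {ω | k < ⨅ i, X i ω} ≤ Real.exp (-(Fintype.card ι * k / Q)) := by
  have hkQ : (k : ℝ) / Q ≤ 1 := div_le_one_of_le₀ (by exact_mod_cast hk) (by positivity)
  rw [h.measureReal_lt_iInf, natCast_sub_div_self hk hQ]
  calc (1 - k / Q : ℝ) ^ Fintype.card ι ≤ Real.exp (-(k / Q)) ^ Fintype.card ι :=
        pow_le_pow_left₀ (by linarith) (Real.one_sub_le_exp_neg _) _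
    _ = _ := by rw [← Real.exp_nat_mul, mul_neg, mul_div_assoc]

end IsIIDUniform

lemma half_le_natFloor {x : ℝ} (hx : 1 ≤ x) : x / 2 ≤ ⌊x⌋₊ := by
  rcases lt_or_ge x 2 with hx2 | hx2
  · have : (1 : ℝ) ≤ ⌊x⌋₊ := by exact_mod_cast Nat.le_floor (by exact_mod_cast hx)
    linarith
  · linarith [Nat.lt_floor_add_one x]

lemma one_le_natFloor_rpow {b x : ℝ} (hb : 1 ≤ b) (hx : 0 ≤ x) : 1 ≤ ⌊b ^ x⌋₊ :=
  Nat.le_floor (by simpa using Real.one_le_rpow hb hx)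

lemma rpow_natCast_mul_eq_pow {b : ℝ} (hb : 0 ≤ b) (n : ℕ) (s : ℝ) :
    b ^ ((n : ℝ) * s) = (b ^ s) ^ n := by
  rw [mul_comm, Real.rpow_mul_natCast hb]

lemma rpow_natCast_mul_mul_rpow_div_pow {b : ℝ} (hb : 0 < b) (n : ℕ) (s t : ℝ) :
    b ^ ((n : ℝ) * s) * b ^ ((n : ℝ) * t) / b ^ n = b ^ ((n : ℝ) * (s + t - 1)) := by
  rw [← Real.rpow_add hb, ← Real.rpow_natCast, ← Real.rpow_sub hb]
  ring_nf

lemma tendsto_rpow_natCast_mul_atTop {b s : ℝ} (hb : 1 < b) (hs : 0 < s) :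
    Tendsto (fun n : ℕ => b ^ ((n : ℝ) * s)) atTop atTop := by
  simp_rw [rpow_natCast_mul_eq_pow (by linarith : 0 ≤ b)]
  exact tendsto_pow_atTop_atTop_of_one_lt (Real.one_lt_rpow hb hs)

lemma tendsto_rpow_natCast_mul_nhds_zero {b s : ℝ} (hb : 1 < b) (hs : s < 0) :
    Tendsto (fun n : ℕ => b ^ ((n : ℝ) * s)) atTop (𝓝 0) := by
  simp_rw [rpow_natCast_mul_eq_pow (by linarith : 0 ≤ b)]
  exact tendsto_pow_atTop_nhds_zero_of_lt_one (by positivity)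
    (Real.rpow_lt_one_of_one_lt_of_neg hb hs)

lemma inv_mul_logb_mem_Ioo_iff {b u t y z : ℝ} (hb : 1 < b) (hu : 0 < u) (ht : 0 < t) :
    t⁻¹ * Real.logb b u ∈ Ioo y z ↔ u ∈ Ioo (b ^ (t * y)) (b ^ (t * z)) := by
  rw [mem_Ioo, mem_Ioo, inv_mul_eq_div, lt_div_iff₀ ht, div_lt_iff₀ ht, mul_comm y, mul_comm z,
    Real.lt_logb_iff_rpow_lt hb hu, Real.logb_lt_iff_lt_rpow hb hu]

lemma EReal.tendsto_nhdsGT_zero_of_sub_le_of_le_add {L : ℝ → EReal} {v : ℝ}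
    (h : ∀ ε > 0, ((v - ε : ℝ) : EReal) ≤ L ε ∧ L ε ≤ ((v + ε : ℝ) : EReal)) :
    Tendsto L (𝓝[>] 0) (𝓝 (v : EReal)) := by
  have hid : Tendsto (fun ε : ℝ => ε) (𝓝[>] 0) (𝓝 0) :=
    tendsto_nhdsWithin_of_tendsto_nhds tendsto_id
  refine tendsto_of_tendsto_of_tendsto_of_le_of_le' (EReal.tendsto_coe.2 (by
      simpa using tendsto_const_nhds.sub hid)) (EReal.tendsto_coe.2 (by
      simpa using tendsto_const_nhds.add hid)) ?_ ?_
  · filter_upwards [self_mem_nhdsWithin] with ε hε using (h ε hε).1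
  · filter_upwards [self_mem_nhdsWithin] with ε hε using (h ε hε).2

section rateSeq

variable {q : ℕ} {p : ℕ → ℝ≥0∞}

lemma rateSeq_le_rateSeq {p' : ℕ → ℝ≥0∞} {n : ℕ} (h : p n ≤ p' n) :
    rateSeq q p n ≤ rateSeq q p' n :=
  mul_le_mul_of_nonneg_left (ENNReal.log_monotone h)
    (EReal.coe_nonneg.2 (inv_nonneg.2 (mul_nonneg n.cast_nonneg (Real.log_natCast_nonneg q))))

lemma rateSeq_ofReal {f : ℕ → ℝ} {n : ℕ} (hf : 0 < f n) :
    rateSeq q (fun n => ENNReal.ofReal (f n)) n =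
      ((Real.log (f n) / (n * Real.log q) : ℝ) : EReal) := by
  rw [rateSeq, ENNReal.log_ofReal_of_pos hf, ← EReal.coe_mul, inv_mul_eq_div]

lemma tendsto_rateSeq_ofReal_const_mul_rpow (hq : 1 < q) {c : ℝ} (hc : 0 < c) (s : ℝ) :
    Tendsto (rateSeq q fun n => ENNReal.ofReal (c * (q : ℝ) ^ ((n : ℝ) * s))) atTop
      (𝓝 (s : EReal)) := by
  have hL : 0 < Real.log q := Real.log_pos (by exact_mod_cast hq)
  have hlim : Tendsto (fun n : ℕ => s + Real.log c / (n * Real.log q)) atTop (𝓝 s) := by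
    simpa using tendsto_const_nhds.add
      (tendsto_const_nhds.div_atTop (tendsto_natCast_atTop_atTop.atTop_mul_const hL))
  refine (EReal.tendsto_coe.2 hlim).congr' ?_
  filter_upwards [eventually_ge_atTop 1] with n hn
  have hn' : (0 : ℝ) < n := by exact_mod_cast hn
  rw [rateSeq_ofReal (by positivity), Real.log_mul hc.ne' (by positivity),
    Real.log_rpow (by positivity)]
  congr 1
  field_simp
  ring

lemma tendsto_rateSeq_ofReal_exp_neg_const_mul_rpow (hq : 1 < q) {c s : ℝ} (hc : 0 < c)
    (hs : 0 < s) :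
    Tendsto (rateSeq q fun n => ENNReal.ofReal (Real.exp (-(c * (q : ℝ) ^ ((n : ℝ) * s)))))
      atTop (𝓝 ⊥) := by
  have hL : 0 < Real.log q := Real.log_pos (by exact_mod_cast hq)
  have hlim : Tendsto (fun n : ℕ => -(c / Real.log q) *
      (Real.exp (Real.log q * s * n) / (n : ℝ) ^ (1 : ℝ))) atTop atBot :=
    ((tendsto_exp_mul_div_rpow_atTop 1 _ (by positivity)).comp
      tendsto_natCast_atTop_atTop).const_mul_atTop_of_neg (by simp [div_pos hc hL])
  refine (EReal.tendsto_coe_nhds_bot_iff.2 hlim).congr' ?_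
  filter_upwards [eventually_ge_atTop 1] with n hn
  have hn' : (0 : ℝ) < n := by exact_mod_cast hn
  rw [rateSeq_ofReal (Real.exp_pos _), Real.log_exp,
    Real.rpow_def_of_pos (by positivity : (0 : ℝ) < q), Real.rpow_one]
  congr 1
  field_simp

lemma le_liminf_rateSeq (hq : 1 < q) {c s : ℝ} (hc : 0 < c)
    (h : ∀ᶠ n : ℕ in atTop, ENNReal.ofReal (c * (q : ℝ) ^ ((n : ℝ) * s)) ≤ p n) :
    (s : EReal) ≤ liminf (rateSeq q p) atTop := by
  rw [← (tendsto_rateSeq_ofReal_const_mul_rpow hq hc s).liminf_eq]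
  exact liminf_le_liminf (h.mono fun n hn => rateSeq_le_rateSeq hn)

lemma limsup_rateSeq_le (hq : 1 < q) {c s : ℝ} (hc : 0 < c)
    (h : ∀ᶠ n : ℕ in atTop, p n ≤ ENNReal.ofReal (c * (q : ℝ) ^ ((n : ℝ) * s))) :
    limsup (rateSeq q p) atTop ≤ (s : EReal) := by
  rw [← (tendsto_rateSeq_ofReal_const_mul_rpow hq hc s).limsup_eq]
  exact limsup_le_limsup (h.mono fun n hn => rateSeq_le_rateSeq hn)

lemma limsup_rateSeq_eq_bot (hq : 1 < q) {c s : ℝ} (hc : 0 < c) (hs : 0 < s)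
    (h : ∀ᶠ n : ℕ in atTop, p n ≤ ENNReal.ofReal (Real.exp (-(c * (q : ℝ) ^ ((n : ℝ) * s))))) :
    limsup (rateSeq q p) atTop = ⊥ := by
  rw [← le_bot_iff, ← (tendsto_rateSeq_ofReal_exp_neg_const_mul_rpow hq hc hs).limsup_eq]
  exact limsup_le_limsup (h.mono fun n hn => rateSeq_le_rateSeq hn)

end rateSeq

noncomputable def windowProb {Ω : Type*} [MeasurableSpace Ω] (μ : Measure Ω) (q : ℕ)
    (U : ℕ → Ω → ℕ) (y z : ℝ) (n : ℕ) : ℝ≥0∞ :=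
  μ {ω | (n : ℝ)⁻¹ * Real.logb q (U n ω) ∈ Ioo y z}

lemma windowProb_eq_measure {Ω : Type*} [MeasurableSpace Ω] {μ : Measure Ω} {q : ℕ}
    {U : ℕ → Ω → ℕ} (hq : 1 < q) {n : ℕ} (hn : 0 < n) (hU : ∀ ω, 0 < U n ω) (y z : ℝ) :
    windowProb μ q U y z n =
      μ {ω | (U n ω : ℝ) ∈ Ioo ((q : ℝ) ^ ((n : ℝ) * y)) ((q : ℝ) ^ ((n : ℝ) * z))} := by
  rw [windowProb]
  congr 1
  ext ω
  exact inv_mul_logb_mem_Ioo_iff (by exact_mod_cast hq) (by exact_mod_cast hU ω)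
    (by exact_mod_cast hn)

section window

variable {Ω : Type*} [MeasurableSpace Ω] {μ : Measure Ω} {q : ℕ} {R : ℝ} {M : ℕ → ℕ}
  {X : (n : ℕ) → Fin (M n) → Ω → ℕ}

lemma pos_of_eq_natFloor_rpow (hq : 2 ≤ q) (hR : 0 ≤ R)
    (hM : ∀ n, M n = ⌊(q : ℝ) ^ ((n : ℝ) * R)⌋₊) (n : ℕ) : 0 < M n := by
  rw [hM]
  exact one_le_natFloor_rpow (by exact_mod_cast (by omega : 1 ≤ q)) (by positivity)

lemma eventually_windowProb_le [IsProbabilityMeasure μ] (hq : 2 ≤ q) (hR : 0 ≤ R)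
    (hM : ∀ n, M n = ⌊(q : ℝ) ^ ((n : ℝ) * R)⌋₊) (hX : ∀ n, IsIIDUniform μ (q ^ n) (X n))
    (y z : ℝ) :
    ∀ᶠ n : ℕ in atTop, windowProb μ q (fun n ω => ⨅ i, X n i ω) y z n ≤
      ENNReal.ofReal ((q : ℝ) ^ ((n : ℝ) * (R + z - 1))) := by
  filter_upwards [eventually_gt_atTop 0] with n hn
  have := Fin.pos_iff_nonempty.1 (pos_of_eq_natFloor_rpow hq hR hM n)
  set b := (q : ℝ) ^ ((n : ℝ) * z)
  have hMR : (M n : ℝ) ≤ (q : ℝ) ^ ((n : ℝ) * R) := by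
    rw [hM]
    exact Nat.floor_le (by positivity)
  rw [windowProb_eq_measure (by omega) hn (hX n).one_le_iInf]
  calc _ ≤ μ {ω | ⨅ i, X n i ω ≤ ⌊b⌋₊} := measure_mono fun ω hω => Nat.le_floor hω.2.le
    _ = ENNReal.ofReal (μ.real {ω | ⨅ i, X n i ω ≤ ⌊b⌋₊}) :=
        (ofReal_measureReal (measure_ne_top _ _)).symm
    _ ≤ ENNReal.ofReal (M n * ⌊b⌋₊ / q ^ n) := by
        gcongr
        simpa using (hX n).measureReal_iInf_le_le (by positivity) ⌊b⌋₊
    _ ≤ ENNReal.ofReal ((q : ℝ) ^ ((n : ℝ) * (R + z - 1))) := by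
        rw [← rpow_natCast_mul_mul_rpow_div_pow (by positivity)]
        gcongr
        exact Nat.floor_le (by positivity)

lemma eventually_le_windowProb [IsProbabilityMeasure μ] (hq : 2 ≤ q) (hR : 0 ≤ R)
    (hM : ∀ n, M n = ⌊(q : ℝ) ^ ((n : ℝ) * R)⌋₊) (hX : ∀ n, IsIIDUniform μ (q ^ n) (X n))
    {y w z : ℝ} (hyw : y < w) (hwz : w < z) (hw0 : 0 < w) (hwR : w < 1 - R) :
    ∀ᶠ n : ℕ in atTop, ENNReal.ofReal (1 / 8 * (q : ℝ) ^ ((n : ℝ) * (R + w - 1))) ≤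
      windowProb μ q (fun n ω => ⨅ i, X n i ω) y z n := by
  have hq1 : (1 : ℝ) < q := by exact_mod_cast hq
  have hq0 : (0 : ℝ) < q := by positivity
  filter_upwards [eventually_gt_atTop 0,
    (tendsto_rpow_natCast_mul_nhds_zero hq1 (by linarith : R + w - 1 < 0)).eventually
      (ge_mem_nhds (by norm_num : (0 : ℝ) < 1 / 2)),
    (tendsto_rpow_natCast_mul_nhds_zero hq1 (by linarith : y - w < 0)).eventually
      (ge_mem_nhds (by norm_num : (0 : ℝ) < 1 / 4)),
    (tendsto_rpow_natCast_mul_atTop hq1 hw0).eventually_ge_atTop 4]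
    with n hn hsmall hratio hlarge
  have := Fin.pos_iff_nonempty.1 (pos_of_eq_natFloor_rpow hq hR hM n)
  have hexp := rpow_natCast_mul_mul_rpow_div_pow hq0 n R w
  set a := (q : ℝ) ^ ((n : ℝ) * y)
  set c := (q : ℝ) ^ ((n : ℝ) * w)
  have hn' : (0 : ℝ) < n := by exact_mod_cast hn
  have hac : a ≤ c / 4 := by
    have : a = c * (q : ℝ) ^ ((n : ℝ) * (y - w)) := by
      rw [← Real.rpow_add hq0, ← mul_add, add_sub_cancel]
    rw [this]
    nlinarith [Real.rpow_pos_of_pos hq0 ((n : ℝ) * w)]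
  have hcQ : c ≤ (q : ℝ) ^ n := by
    simpa using Real.rpow_le_rpow_of_exponent_le hq1.le (show (n : ℝ) * w ≤ n by nlinarith)
  have hcz : c < (q : ℝ) ^ ((n : ℝ) * z) := Real.rpow_lt_rpow_of_exponent_lt hq1 (by nlinarith)
  have hcount := div_eight_le_mul_sub_natFloor_mul_one_sub (by positivity)
    (half_le_natFloor (Real.one_le_rpow hq1.le (by positivity)))
    (Nat.floor_le (by positivity)) hlarge (by positivity) hac (hexp ▸ hsmall)
  rw [← hM, hexp] at hcount
  rw [windowProb_eq_measure (by omega) hn (hX n).one_le_iInf]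
  calc ENNReal.ofReal (1 / 8 * (q : ℝ) ^ ((n : ℝ) * (R + w - 1)))
      ≤ ENNReal.ofReal (M n * ((⌊c⌋₊ - ⌊a⌋₊) / q ^ n) * (1 - M n * ⌊c⌋₊ / q ^ n)) :=
        ENNReal.ofReal_le_ofReal (by linarith)
    _ ≤ ENNReal.ofReal (μ.real {ω | ⌊a⌋₊ < ⨅ i, X n i ω ∧ ⨅ i, X n i ω ≤ ⌊c⌋₊}) := by
        gcongr
        simpa using (hX n).le_measureReal_lt_iInf_le (by positivity)
          (Nat.floor_le_floor (by linarith)) (Nat.floor_le_of_le (by exact_mod_cast hcQ))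
    _ = μ {ω | ⌊a⌋₊ < ⨅ i, X n i ω ∧ ⨅ i, X n i ω ≤ ⌊c⌋₊} :=
        ofReal_measureReal (measure_ne_top _ _)
    _ ≤ _ := by
        refine measure_mono fun ω ⟨hlow, hupp⟩ => ?_
        exact ⟨(Nat.floor_lt (by positivity)).1 hlow,
          ((Nat.cast_le.2 hupp).trans (Nat.floor_le (by positivity))).trans_lt hcz⟩

lemma eventually_windowProb_le_exp [IsFiniteMeasure μ] (hq : 2 ≤ q) (hR : 0 ≤ R)
    (hM : ∀ n, M n = ⌊(q : ℝ) ^ ((n : ℝ) * R)⌋₊) (hX : ∀ n, IsIIDUniform μ (q ^ n) (X n))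
    {y : ℝ} (hy0 : 0 ≤ y) (hy1 : y ≤ 1) (z : ℝ) :
    ∀ᶠ n : ℕ in atTop, windowProb μ q (fun n ω => ⨅ i, X n i ω) y z n ≤
      ENNReal.ofReal (Real.exp (-(1 / 4 * (q : ℝ) ^ ((n : ℝ) * (R + y - 1))))) := by
  have hq1 : (1 : ℝ) < q := by exact_mod_cast hq
  filter_upwards [eventually_gt_atTop 0] with n hn
  have := Fin.pos_iff_nonempty.1 (pos_of_eq_natFloor_rpow hq hR hM n)
  set a := (q : ℝ) ^ ((n : ℝ) * y)
  have ha1 : 1 ≤ a := Real.one_le_rpow hq1.le (by positivity)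
  have haQ : ⌊a⌋₊ ≤ q ^ n := Nat.floor_le_of_le (by
    simpa using Real.rpow_le_rpow_of_exponent_le hq1.le (show (n : ℝ) * y ≤ n by
      nlinarith [(by exact_mod_cast hn : (0 : ℝ) < n)]))
  have hmean : 1 / 4 * (q : ℝ) ^ ((n : ℝ) * (R + y - 1)) ≤ M n * ⌊a⌋₊ / (q : ℝ) ^ n := by
    calc _ = (q : ℝ) ^ ((n : ℝ) * R) / 2 * (a / 2) / (q : ℝ) ^ n := by
          rw [← rpow_natCast_mul_mul_rpow_div_pow (by positivity)]
          ring
      _ ≤ _ := by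
          gcongr
          · rw [hM]
            exact half_le_natFloor (Real.one_le_rpow hq1.le (by positivity))
          · exact half_le_natFloor ha1
  rw [windowProb_eq_measure (by omega) hn (hX n).one_le_iInf]
  calc _ ≤ μ {ω | ⌊a⌋₊ < ⨅ i, X n i ω} :=
        measure_mono fun ω hω => (Nat.floor_lt (by positivity)).2 hω.1
    _ = ENNReal.ofReal (μ.real {ω | ⌊a⌋₊ < ⨅ i, X n i ω}) :=
        (ofReal_measureReal (measure_ne_top _ _)).symm
    _ ≤ ENNReal.ofReal (Real.exp (-(M n * ⌊a⌋₊ / (q : ℝ) ^ n))) := by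
        gcongr
        simpa using (hX n).measureReal_lt_iInf_le_exp (by positivity) haQ
    _ ≤ _ := by gcongr

lemma limsup_rateSeq_windowProb_le [IsProbabilityMeasure μ] (hq : 2 ≤ q) (hR : 0 ≤ R)
    (hM : ∀ n, M n = ⌊(q : ℝ) ^ ((n : ℝ) * R)⌋₊) (hX : ∀ n, IsIIDUniform μ (q ^ n) (X n))
    (y z : ℝ) :
    limsup (rateSeq q (windowProb μ q (fun n ω => ⨅ i, X n i ω) y z)) atTop ≤
      ((R + z - 1 : ℝ) : EReal) :=
  limsup_rateSeq_le (by omega) one_pos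
    ((eventually_windowProb_le hq hR hM hX y z).mono fun n hn => by rwa [one_mul])

lemma sub_le_liminf_rateSeq_windowProb [IsProbabilityMeasure μ] (hq : 2 ≤ q) (hR : 0 ≤ R)
    (hR1 : R < 1) (hM : ∀ n, M n = ⌊(q : ℝ) ^ ((n : ℝ) * R)⌋₊)
    (hX : ∀ n, IsIIDUniform μ (q ^ n) (X n)) {x ε : ℝ} (hx0 : 0 ≤ x) (hxR : x ≤ 1 - R)
    (hε : 0 < ε) :
    ((R + x - 1 - ε : ℝ) : EReal) ≤
      liminf (rateSeq q (windowProb μ q (fun n ω => ⨅ i, X n i ω) (x - ε) (x + ε))) atTop := by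
  obtain ⟨w, hyw, hwz⟩ := exists_between (show max (x - ε) 0 < min (x + ε) (1 - R) by
    simp only [max_lt_iff, lt_min_iff]
    exact ⟨⟨by linarith, by linarith⟩, by linarith, by linarith⟩)
  rw [max_lt_iff] at hyw
  rw [lt_min_iff] at hwz
  exact (EReal.coe_le_coe_iff.2 (by linarith)).trans (le_liminf_rateSeq (by omega) (by norm_num)
    (eventually_le_windowProb hq hR hM hX hyw.1 hwz.1 hyw.2 hwz.2))

lemma limsup_rateSeq_windowProb_eq_bot [IsFiniteMeasure μ] (hq : 2 ≤ q) (hR : 0 ≤ R)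
    (hM : ∀ n, M n = ⌊(q : ℝ) ^ ((n : ℝ) * R)⌋₊) (hX : ∀ n, IsIIDUniform μ (q ^ n) (X n))
    {y : ℝ} (hy0 : 0 ≤ y) (hy1 : y ≤ 1) (hRy : 1 - R < y) (z : ℝ) :
    limsup (rateSeq q (windowProb μ q (fun n ω => ⨅ i, X n i ω) y z)) atTop = ⊥ :=
  limsup_rateSeq_eq_bot (by omega) (by norm_num) (by linarith)
    (eventually_windowProb_le_exp hq hR hM hX hy0 hy1 z)

end window

/-- `{(1/n) log_q Uⁿ}` satisfies the LDP with rate function `I^U`. -/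
theorem grand_min_uniform_LDP
    {Ω : Type*} [MeasurableSpace Ω] (μ : Measure Ω) [IsProbabilityMeasure μ]
    (q : ℕ) (hq : 2 ≤ q) (R : ℝ) (hR : R ∈ Set.Ioo (0:ℝ) 1)
    (M : ℕ → ℕ) (hM : ∀ n : ℕ, M n = ⌊(q : ℝ) ^ ((n : ℝ) * R)⌋₊)
    (Un : (n : ℕ) → Fin (M n) → Ω → ℕ)
    (hUnmeas : ∀ n i, Measurable (Un n i))
    (hUnval : ∀ n i ω, Un n i ω ∈ Finset.Icc 1 (q ^ n))
    (hUnunif : ∀ n i, ∀ k ∈ Finset.Icc 1 (q ^ n), μ {ω | Un n i ω = k} = ((q : ℝ≥0∞) ^ n)⁻¹)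
    (hUnindep : ∀ n, iIndepFun (Un n) μ)
    (U : ℕ → Ω → ℕ) (hU : ∀ n ω, U n ω = ⨅ i, Un n i ω)
    :
    ∀ x ∈ Set.Icc (0:ℝ) 1,
      Filter.Tendsto
        (fun ε : ℝ =>
          Filter.liminf
            (rateSeq q (fun n =>
              μ {ω | (n : ℝ)⁻¹ * Real.logb q ((U n ω : ℝ)) ∈ Set.Ioo (x - ε) (x + ε)}))
            Filter.atTop)
        (nhdsWithin 0 (Set.Ioi 0)) (nhds (-(IU R x))) ∧
      Filter.Tendsto
        (fun ε : ℝ =>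
          Filter.limsup
            (rateSeq q (fun n =>
              μ {ω | (n : ℝ)⁻¹ * Real.logb q ((U n ω : ℝ)) ∈ Set.Ioo (x - ε) (x + ε)}))
            Filter.atTop)
        (nhdsWithin 0 (Set.Ioi 0)) (nhds (-(IU R x))) := by
  intro x ⟨hx0, hx1⟩
  obtain rfl : U = fun n ω => ⨅ i, Un n i ω := funext fun n => funext (hU n)
  have hX : ∀ n, IsIIDUniform μ (q ^ n) (Un n) := fun n =>
    ⟨hUnmeas n, hUnval n, fun i k hk => by simpa using hUnunif n i k hk, hUnindep n⟩
  rcases le_or_gt x (1 - R) with hxR | hxR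
  · have hlow := fun ε (hε : 0 < ε) =>
      sub_le_liminf_rateSeq_windowProb hq hR.1.le hR.2 hM hX hx0 hxR hε
    have hupp := fun ε : ℝ =>
      (limsup_rateSeq_windowProb_le hq hR.1.le hM hX (x - ε) (x + ε)).trans_eq
        (congrArg _ (by ring) : ((R + (x + ε) - 1 : ℝ) : EReal) = ((R + x - 1 + ε : ℝ) : EReal))
    rw [IU, if_pos hxR, ← EReal.coe_neg, show -(1 - R - x) = R + x - 1 by ring]
    exact ⟨EReal.tendsto_nhdsGT_zero_of_sub_le_of_le_add fun ε hε =>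
        ⟨hlow ε hε, (liminf_le_limsup).trans (hupp ε)⟩,
      EReal.tendsto_nhdsGT_zero_of_sub_le_of_le_add fun ε hε =>
        ⟨(hlow ε hε).trans liminf_le_limsup, hupp ε⟩⟩
  · have hbot : ∀ᶠ ε in 𝓝[>] (0 : ℝ), limsup (rateSeq q
          (windowProb μ q (fun n ω => ⨅ i, Un n i ω) (x - ε) (x + ε))) atTop = ⊥ := by
      filter_upwards [Ioo_mem_nhdsGT (show (0 : ℝ) < x - (1 - R) by linarith)] with ε hε
      exact limsup_rateSeq_windowProb_eq_bot hq hR.1.le hM hX (by linarith [hε.2, hR.2])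
        (by linarith [hε.1, hx1]) (by linarith [hε.2]) _
    rw [IU, if_neg hxR.not_ge, EReal.neg_top]
    exact ⟨tendsto_const_nhds.congr'
        (hbot.mono fun ε h => (le_bot_iff.1 ((liminf_le_limsup).trans h.le)).symm),
      tendsto_const_nhds.congr' (hbot.mono fun ε h => h.symm)⟩
end

section
/- (Simplified error exponent.) Let I : [0,1] → [0,∞] be convex with I(H) = 0 for some H ∈ (0,1), and suppose there exists x* ∈ (H,1) at which I is finite and differentiable with I′(x*) = 1; set H_{1/2} = x* − I(x*). Then for any R with H < 1 − R: if 1 − R > x* then inf_{a ∈ [H, 1−R]} { (1 − R − a) + I(a) } = 1 − R − H_{1/2}, while if 1 − R ≤ x* then inf_{a ∈ [H, 1−R]} { (1 − R − a) + I(a) } = I(1 − R). -/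
/-!
On the effective domain `D = {x ∈ [0,1] | I x < ∞}`, which is an interval containing `H` and `x*`,
the real function `h a = I a - a` is convex with `h'(x*) = 0`. Hence `x*` minimises `h` on `D`,
and `h` is antitone on `D ∩ (-∞, x*]`. The objective is `(1 - R) + h a` wherever `I a < ∞` and `∞`
elsewhere, so its infimum over `[H, 1 - R]` is attained at `x*` if `x* < 1 - R`, and at the right
endpoint `1 - R` otherwise.
-/

open Set

/-- `ConvexOn` needs a module structure on the codomain, which `EReal` lacks. -/
def ERealConvexOn {E : Type*} [AddCommGroup E] [Module ℝ E] (s : Set E) (f : E → EReal) : Prop :=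
  ∀ x ∈ s, ∀ y ∈ s, ∀ a b : ℝ, 0 ≤ a → 0 ≤ b → a + b = 1 →
    f (a • x + b • y) ≤ (a : EReal) * f x + (b : EReal) * f y

namespace ERealConvexOn

variable {E : Type*} [AddCommGroup E] [Module ℝ E] {s : Set E} {f : E → EReal}

theorem le_coe_toReal_combo (hf : ERealConvexOn s f) (hbot : ∀ x ∈ s, f x ≠ ⊥)
    {x y : E} (hx : x ∈ {x ∈ s | f x ≠ ⊤}) (hy : y ∈ {x ∈ s | f x ≠ ⊤})
    {a b : ℝ} (ha : 0 ≤ a) (hb : 0 ≤ b) (hab : a + b = 1) :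
    f (a • x + b • y) ≤ ((a * (f x).toReal + b * (f y).toReal : ℝ) : EReal) := by
  rw [EReal.coe_add, EReal.coe_mul, EReal.coe_mul, EReal.coe_toReal hx.2 (hbot x hx.1),
    EReal.coe_toReal hy.2 (hbot y hy.1)]
  exact hf x hx.1 y hy.1 a b ha hb hab

theorem convex_setOf_ne_top (hf : ERealConvexOn s f) (hs : Convex ℝ s)
    (hbot : ∀ x ∈ s, f x ≠ ⊥) : Convex ℝ {x ∈ s | f x ≠ ⊤} :=
  fun _ hx _ hy _ _ ha hb hab =>
    ⟨hs hx.1 hy.1 ha hb hab,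
      ne_top_of_le_ne_top (EReal.coe_ne_top _) (hf.le_coe_toReal_combo hbot hx hy ha hb hab)⟩

theorem convexOn_toReal (hf : ERealConvexOn s f) (hs : Convex ℝ s) (hbot : ∀ x ∈ s, f x ≠ ⊥) :
    ConvexOn ℝ {x ∈ s | f x ≠ ⊤} (fun x => (f x).toReal) := by
  refine ⟨hf.convex_setOf_ne_top hs hbot, fun x hx y hy a b ha hb hab => ?_⟩
  have hz := hf.convex_setOf_ne_top hs hbot hx hy ha hb hab
  exact (EReal.toReal_le_toReal (hf.le_coe_toReal_combo hbot hx hy ha hb hab)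
    (hbot _ hz.1) (EReal.coe_ne_top _)).trans_eq (EReal.toReal_coe _)

end ERealConvexOn

theorem isMinOn_coe_add_of_isMinOn_add_toReal {α : Type*} {c : α → ℝ} {f : α → EReal}
    {s : Set α} {m : α} (hbot : ∀ x ∈ s, f x ≠ ⊥) (hm : m ∈ {x ∈ s | f x ≠ ⊤})
    (h : IsMinOn (fun x => c x + (f x).toReal) {x ∈ s | f x ≠ ⊤} m) :
    IsMinOn (fun x => (c x : EReal) + f x) s m := by
  intro x hx
  by_cases hxt : f x = ⊤
  · simp [hxt, EReal.add_top_of_ne_bot (EReal.coe_ne_bot _)]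
  · have hle : c m + (f m).toReal ≤ c x + (f x).toReal := h ⟨hx, hxt⟩
    show (c m : EReal) + f m ≤ c x + f x
    rw [← EReal.coe_toReal hm.2 (hbot m hm.1), ← EReal.coe_toReal hxt (hbot x hx)]
    exact_mod_cast hle

theorem IsMinOn.biInf_eq {α β : Type*} [CompleteLattice β] {f : α → β} {s : Set α} {x₀ : α}
    (h : IsMinOn f s x₀) (hx₀ : x₀ ∈ s) : ⨅ x ∈ s, f x = f x₀ :=
  le_antisymm (iInf₂_le x₀ hx₀) (le_iInf₂ h)

namespace ConvexOn

variable {D : Set ℝ} {h : ℝ → ℝ} {x₀ : ℝ}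

theorem isMinOn_of_hasDerivAt_eq_zero (hh : ConvexOn ℝ D h) (hx₀ : x₀ ∈ D)
    (hd : HasDerivAt h 0 x₀) : IsMinOn h D x₀ := by
  refine isMinOn_iff.2 fun a ha => ?_
  rcases lt_trichotomy a x₀ with hlt | rfl | hgt
  · have hslope := hh.slope_le_of_hasDerivAt ha hx₀ hlt hd
    rw [slope_def_field, div_le_iff₀ (sub_pos.2 hlt)] at hslope
    simpa using hslope
  · exact le_rfl
  · have hslope := hh.le_slope_of_hasDerivAt hx₀ ha hgt hd
    rw [slope_def_field, le_div_iff₀ (sub_pos.2 hgt)] at hslope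
    simpa using hslope

theorem antitoneOn_of_isMinOn (hh : ConvexOn ℝ D h) (hmin : IsMinOn h D x₀) (hx₀ : x₀ ∈ D) :
    AntitoneOn h (D ∩ Iic x₀) := fun a ha b hb hab =>
  (hh.le_on_segment ha.1 hx₀ (Icc_subset_segment (𝕜 := ℝ) ⟨hab, hb.2⟩)).trans
    (max_eq_left (hmin ha.1)).le

end ConvexOn

/-- Simplified error exponent.  Let `I : [0,1] → [0,∞]` be convex
with `I(H) = 0`, finite and differentiable at some `x* ∈ (H,1)` with `I′(x*) = 1`,
and set `H_{1/2} = x* - I(x*)`.  For `R` with `H < 1 - R`: if `1 - R > x*` then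
`inf_{a ∈ [H,1-R]} ((1-R-a) + I(a)) = 1 - R - H_{1/2}`; if `1 - R ≤ x*` the infimum
is `I(1-R)`. -/
theorem grand_simplified_error_exponent
    (I : ℝ → EReal) (H : ℝ) (hH : H ∈ Set.Ioo (0:ℝ) 1)
    (hnn : ∀ x ∈ Set.Icc (0:ℝ) 1, 0 ≤ I x)
    (hconv : ∀ x ∈ Set.Icc (0:ℝ) 1, ∀ y ∈ Set.Icc (0:ℝ) 1, ∀ a b : ℝ,
      0 ≤ a → 0 ≤ b → a + b = 1 →
      I (a * x + b * y) ≤ (a : EReal) * I x + (b : EReal) * I y)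
    (hIH : I H = 0)
    (xs : ℝ) (hxs : xs ∈ Set.Ioo H 1) (hfin : I xs ≠ ⊤)
    (hderiv : HasDerivAt (fun x => (I x).toReal) 1 xs)
    (R : ℝ) (hR : R ∈ Set.Ioo (0:ℝ) 1) (hcap : H < 1 - R) :
    (xs < 1 - R →
      (⨅ a ∈ Set.Icc H (1 - R), (((1 - R - a : ℝ) : EReal) + I a)) =
        ((1 - R - (xs - (I xs).toReal) : ℝ) : EReal)) ∧
    (1 - R ≤ xs →
      (⨅ a ∈ Set.Icc H (1 - R), (((1 - R - a : ℝ) : EReal) + I a)) = I (1 - R)) := by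
  obtain ⟨hH0, hH1⟩ := hH
  obtain ⟨hxsH, hxs1⟩ := hxs
  set r := 1 - R
  have hbot : ∀ x ∈ Icc (0:ℝ) 1, I x ≠ ⊥ := fun x hx =>
    ne_bot_of_le_ne_bot EReal.zero_ne_bot (hnn x hx)
  have hI : ERealConvexOn (Icc (0:ℝ) 1) I := hconv
  set D := {x ∈ Icc (0:ℝ) 1 | I x ≠ ⊤}
  have hD : Convex ℝ D := hI.convex_setOf_ne_top (convex_Icc 0 1) hbot
  have hxsD : xs ∈ D := ⟨⟨hH0.le.trans hxsH.le, hxs1.le⟩, hfin⟩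
  have hgap : ConvexOn ℝ D (fun a => (I a).toReal - a) :=
    (hI.convexOn_toReal (convex_Icc 0 1) hbot).sub (concaveOn_id hD)
  have hmin : IsMinOn (fun a => (I a).toReal - a) D xs :=
    hgap.isMinOn_of_hasDerivAt_eq_zero hxsD (sub_self (1 : ℝ) ▸ hderiv.sub (hasDerivAt_id' xs))
  have hIcc : Icc H r ⊆ Icc 0 1 := Icc_subset_Icc hH0.le (by linarith [hR.1])
  have hbot' : ∀ a ∈ Icc H r, I a ≠ ⊥ := fun a ha => hbot a (hIcc ha)
  constructor
  · intro hxsr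
    have hm : xs ∈ {a ∈ Icc H r | I a ≠ ⊤} := ⟨⟨hxsH.le, hxsr.le⟩, hfin⟩
    rw [(isMinOn_coe_add_of_isMinOn_add_toReal hbot' hm ?_).biInf_eq hm.1]
    · show ((r - xs : ℝ) : EReal) + I xs = _
      rw [← EReal.coe_toReal hfin (hbot xs hxsD.1), EReal.toReal_coe, ← EReal.coe_add]
      congr 1
      ring
    · exact isMinOn_iff.2 fun a ha => by
        have := isMinOn_iff.1 hmin a ⟨hIcc ha.1, ha.2⟩
        linarith
  · intro hrxs
    have hHD : H ∈ D := ⟨⟨hH0.le, hH1.le⟩, by simp [hIH]⟩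
    have hrD : r ∈ D := hD.ordConnected.out hHD hxsD ⟨hcap.le, hrxs⟩
    have hm : r ∈ {a ∈ Icc H r | I a ≠ ⊤} := ⟨⟨hcap.le, le_rfl⟩, hrD.2⟩
    rw [(isMinOn_coe_add_of_isMinOn_add_toReal hbot' hm ?_).biInf_eq hm.1]
    · simp
    · exact isMinOn_iff.2 fun a ha => by
        have := hgap.antitoneOn_of_isMinOn hmin hxsD ⟨⟨hIcc ha.1, ha.2⟩, ha.1.2.trans hrxs⟩
          ⟨hrD, hrxs⟩ ha.1.2
        linarith
end

section
/- (Concentration on correct decodings conditioned on early termination.) Set D_n = min(G_n, U^n). If y ∈ (0, 1−R) is such that I^N(y) < I^U(y) = 1 − R − y, then the probability of a correct decoding given that the algorithm terminates within q^{ny} queries converges to one: lim_{n→∞} P(G_n < U^n | (1/n) log D_n ≤ y) = 1. Moreover, such a y necessarily exists whenever I^N(0) < 1 − R (i.e., whenever the code-book rate is less than one minus the min-entropy rate of the noise). -/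
open MeasureTheory ProbabilityTheory Filter Set Topology
open scoped ENNReal

/-!
Let `B_n` be the event `(1/n) log D_n ≤ y`. It contains `{(1/n) log G_n < y}`, whose probability
the LDP lower bound keeps above `q^{-nc}` for any real `c > I^N(y)`: convexity between `0` (where
`I^N` is finite) and `y` moves the rate point slightly to the left of `y`, into the open set.
On a wrong decoding in `B_n` the minimum `U^n` is at most `q^{ny}`, and a union bound over the
`M_n ≤ q^{nR}` uniform codewords bounds this by `q^{-n(1-R-y)}`. Choosing `c < 1 - R - y`, wrong
decodings are exponentially negligible inside `B_n`.
A suitable `y` exists because convexity between `H` (where `I^N = 0`) and `0` makes `I^N(y)`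
close to `I^N(0) < 1 - R` for small `y`.
-/

theorem EReal.eventually_lt_of_convex_comb {f : ℝ → EReal} {a b c : ℝ}
    (hconv : ∀ t ∈ Icc (0 : ℝ) 1,
      f (t * a + (1 - t) * b) ≤ (t : EReal) * f a + ((1 - t : ℝ) : EReal) * f b)
    (ha : f a ≠ ⊤) (hb : f b < c) :
    ∀ᶠ t in 𝓝[>] 0, f (t * a + (1 - t) * b) < c := by
  obtain ⟨A, haA, -⟩ := EReal.lt_iff_exists_real_btwn.1 (lt_top_iff_ne_top.2 ha)
  obtain ⟨B, hbB, hBc⟩ := EReal.lt_iff_exists_real_btwn.1 hb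
  have hlim : Tendsto (fun t : ℝ => t * A + (1 - t) * B) (𝓝[>] 0) (𝓝 B) := by
    have hcont : Continuous fun t : ℝ => t * A + (1 - t) * B := by fun_prop
    simpa using (hcont.tendsto 0).mono_left nhdsWithin_le_nhds
  filter_upwards [hlim.eventually (gt_mem_nhds (EReal.coe_lt_coe_iff.1 hBc)),
    Ioo_mem_nhdsGT zero_lt_one] with t hlt ⟨ht0, ht1⟩
  calc f (t * a + (1 - t) * b)
      ≤ (t : EReal) * f a + ((1 - t : ℝ) : EReal) * f b := hconv t ⟨ht0.le, ht1.le⟩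
    _ ≤ (t : EReal) * A + ((1 - t : ℝ) : EReal) * B := by gcongr
    _ = ((t * A + (1 - t) * B : ℝ) : EReal) := by push_cast; rfl
    _ < c := by exact_mod_cast hlt

theorem Real.logb_min_le_left {b x y : ℝ} (hb : 1 < b) (hy : 0 < y) :
    logb b (min x y) ≤ logb b x := by
  rcases min_choice x y with h | h <;> rw [h]
  exact logb_le_logb_of_le hb hy (h ▸ min_le_left x y)

theorem le_floor_rpow_of_logb_div_le {q y : ℝ} {n u : ℕ} (hq : 1 < q) (hn : 0 < n)
    (hu : 0 < u) (h : (n : ℝ)⁻¹ * Real.logb q u ≤ y) : u ≤ ⌊q ^ ((n : ℝ) * y)⌋₊ := by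
  rw [inv_mul_le_iff₀ (by exact_mod_cast hn),
    Real.logb_le_iff_le_rpow hq (by exact_mod_cast hu)] at h
  exact Nat.le_floor h

theorem eventually_ofReal_rpow_le_of_lt_liminf_rateSeq {q : ℕ} (hq : 1 < q) {p : ℕ → ℝ≥0∞}
    {r : ℝ} (h : (r : EReal) < liminf (rateSeq q p) atTop) :
    ∀ᶠ n : ℕ in atTop, ENNReal.ofReal ((q : ℝ) ^ ((n : ℝ) * r)) ≤ p n := by
  filter_upwards [eventually_lt_of_lt_liminf h, eventually_gt_atTop 0] with n hn hn0
  have hL : 0 < (n : ℝ) * Real.log q :=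
    mul_pos (by exact_mod_cast hn0) (Real.log_pos (by exact_mod_cast hq))
  rw [rateSeq, EReal.coe_inv, mul_comm, ← div_eq_mul_inv,
    EReal.lt_div_iff (by exact_mod_cast hL) (EReal.coe_ne_top _), ← EReal.coe_mul] at hn
  rw [← ENNReal.log_le_log_iff, Real.rpow_def_of_pos (by positivity),
    ENNReal.log_ofReal_of_pos (Real.exp_pos _), Real.log_exp]
  convert hn.le using 2
  ring

theorem tendsto_div_nhds_zero_of_le_rpow_of_rpow_le {a b : ℕ → ℝ≥0∞} {q α β : ℝ} (hq : 1 < q)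
    (hαβ : α < β) (ha : ∀ᶠ n : ℕ in atTop, a n ≤ ENNReal.ofReal (q ^ ((n : ℝ) * α)))
    (hb : ∀ᶠ n : ℕ in atTop, ENNReal.ofReal (q ^ ((n : ℝ) * β)) ≤ b n) :
    Tendsto (fun n => a n / b n) atTop (𝓝 0) := by
  have hq0 : 0 < q := zero_lt_one.trans hq
  have hρ : ENNReal.ofReal (q ^ (α - β)) < 1 := by
    rw [ENNReal.ofReal_lt_one]
    exact Real.rpow_lt_one_of_one_lt_of_neg hq (sub_neg.2 hαβ)
  refine tendsto_of_tendsto_of_tendsto_of_le_of_le' tendsto_const_nhds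
    (ENNReal.tendsto_pow_atTop_nhds_zero_of_lt_one hρ) (Eventually.of_forall fun _ => zero_le)
    ?_
  filter_upwards [ha, hb] with n han hbn
  calc a n / b n ≤ ENNReal.ofReal (q ^ ((n : ℝ) * α)) / ENNReal.ofReal (q ^ ((n : ℝ) * β)) :=
        ENNReal.div_le_div han hbn
    _ = ENNReal.ofReal (q ^ (α - β)) ^ n := by
        rw [← ENNReal.ofReal_div_of_pos (by positivity), ← Real.rpow_sub hq0,
          ← ENNReal.ofReal_pow (by positivity), ← Real.rpow_natCast, ← Real.rpow_mul hq0.le]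
        ring_nf

theorem natCast_mul_floor_rpow_mul_inv_pow_le {q M n : ℕ} (hq : 0 < q) {R y : ℝ}
    (hM : (M : ℝ) ≤ (q : ℝ) ^ ((n : ℝ) * R)) :
    (M : ℝ≥0∞) * (⌊(q : ℝ) ^ ((n : ℝ) * y)⌋₊ * ((q : ℝ≥0∞) ^ n)⁻¹) ≤
      ENNReal.ofReal ((q : ℝ) ^ ((n : ℝ) * (R + y - 1))) := by
  have hq' : (0 : ℝ) < q := by exact_mod_cast hq
  calc (M : ℝ≥0∞) * (⌊(q : ℝ) ^ ((n : ℝ) * y)⌋₊ * ((q : ℝ≥0∞) ^ n)⁻¹)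
      = ENNReal.ofReal (M * (⌊(q : ℝ) ^ ((n : ℝ) * y)⌋₊ * ((q : ℝ) ^ n)⁻¹)) := by
        rw [ENNReal.ofReal_mul (by positivity), ENNReal.ofReal_mul (by positivity),
          ENNReal.ofReal_inv_of_pos (by positivity), ENNReal.ofReal_pow hq'.le]
        simp
    _ ≤ ENNReal.ofReal
          ((q : ℝ) ^ ((n : ℝ) * R) * ((q : ℝ) ^ ((n : ℝ) * y) * ((q : ℝ) ^ n)⁻¹)) := by
        gcongr
        exact Nat.floor_le (by positivity)
    _ = ENNReal.ofReal ((q : ℝ) ^ ((n : ℝ) * (R + y - 1))) := by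
        rw [← Real.rpow_natCast, ← Real.rpow_neg hq'.le, ← Real.rpow_add hq',
          ← Real.rpow_add hq']
        ring_nf

section

variable {Ω : Type*} [MeasurableSpace Ω] (μ : Measure Ω)

theorem tendsto_measure_inter_div_nhds_one [IsFiniteMeasure μ] {A B : ℕ → Set Ω}
    (hB : ∀ᶠ n in atTop, μ (B n) ≠ 0)
    (h : Tendsto (fun n => μ (B n \ A n) / μ (B n)) atTop (𝓝 0)) :
    Tendsto (fun n => μ (A n ∩ B n) / μ (B n)) atTop (𝓝 1) := by
  have hlow : Tendsto (fun n => 1 - μ (B n \ A n) / μ (B n)) atTop (𝓝 1) := by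
    simpa using ENNReal.Tendsto.sub tendsto_const_nhds h (Or.inl ENNReal.one_ne_top)
  refine tendsto_of_tendsto_of_tendsto_of_le_of_le' hlow tendsto_const_nhds ?_
    (Eventually.of_forall fun n => ENNReal.div_le_of_le_mul (by
      rw [one_mul]; exact measure_mono inter_subset_right))
  filter_upwards [hB] with n hBn
  have hBt : μ (B n) ≠ ⊤ := measure_ne_top μ _
  rw [ENNReal.le_div_iff_mul_le (Or.inl hBn) (Or.inl hBt), ENNReal.sub_mul (fun _ _ => hBt),
    one_mul, ENNReal.div_mul_cancel hBn hBt, tsub_le_iff_right]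
  calc μ (B n) ≤ μ (A n ∩ B n ∪ B n \ A n) := measure_mono fun ω hω => by
        by_cases hA : ω ∈ A n
        exacts [Or.inl ⟨hA, hω⟩, Or.inr ⟨hω, hA⟩]
    _ ≤ μ (A n ∩ B n) + μ (B n \ A n) := measure_union_le _ _

theorem measure_le_le_mul_of_measure_eq_le {X : Ω → ℕ} (hX : ∀ ω, 0 < X ω) {c : ℝ≥0∞}
    (hc : ∀ k, μ {ω | X ω = k} ≤ c) (T : ℕ) : μ {ω | X ω ≤ T} ≤ T * c := by
  calc μ {ω | X ω ≤ T} ≤ μ (⋃ k ∈ Finset.Icc 1 T, {ω | X ω = k}) := measure_mono fun ω hω =>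
        mem_biUnion (Finset.mem_Icc.2 ⟨hX ω, hω⟩) rfl
    _ ≤ ∑ k ∈ Finset.Icc 1 T, μ {ω | X ω = k} := measure_biUnion_finset_le _ _
    _ ≤ ∑ _k ∈ Finset.Icc 1 T, c := Finset.sum_le_sum fun k _ => hc k
    _ = T * c := by simp

theorem measure_iInf_le_le_sum {ι : Type*} [Fintype ι] [Nonempty ι] (X : ι → Ω → ℕ) (T : ℕ) :
    μ {ω | ⨅ i, X i ω ≤ T} ≤ ∑ i, μ {ω | X i ω ≤ T} := by
  refine (measure_mono fun ω hω => ?_).trans (measure_iUnion_fintype_le μ _)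
  obtain ⟨i, hi⟩ := exists_eq_ciInf_of_finite (f := fun i => X i ω)
  exact mem_iUnion.2 ⟨i, (hi.trans_le hω : X i ω ≤ T)⟩

theorem measure_iInf_le_le_of_measure_eq_le {ι : Type*} [Fintype ι] [Nonempty ι]
    {X : ι → Ω → ℕ} {N : ℕ} (hval : ∀ i ω, X i ω ∈ Finset.Icc 1 N) {p : ℝ≥0∞}
    (hp : ∀ i, ∀ k ∈ Finset.Icc 1 N, μ {ω | X i ω = k} ≤ p) (T : ℕ) :
    μ {ω | ⨅ i, X i ω ≤ T} ≤ Fintype.card ι * (T * p) := by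
  have hmass : ∀ i k, μ {ω | X i ω = k} ≤ p := by
    intro i k
    by_cases hk : k ∈ Finset.Icc 1 N
    · exact hp i k hk
    · have : {ω | X i ω = k} = ∅ := eq_empty_of_forall_notMem fun ω (h : X i ω = k) =>
        hk (h ▸ hval i ω)
      simp [this]
  calc μ {ω | ⨅ i, X i ω ≤ T} ≤ ∑ i, μ {ω | X i ω ≤ T} := measure_iInf_le_le_sum μ X T
    _ ≤ ∑ _i : ι, T * p := Finset.sum_le_sum fun i _ =>
        measure_le_le_mul_of_measure_eq_le μ (fun ω => (Finset.mem_Icc.1 (hval i ω)).1)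
          (hmass i) T
    _ = Fintype.card ι * (T * p) := by simp

theorem tendsto_measure_correct_decoding_div [IsFiniteMeasure μ] {q : ℕ} (hq : 1 < q) {R : ℝ}
    (hR : 0 ≤ R) {M : ℕ → ℕ} (hM : ∀ n : ℕ, M n = ⌊(q : ℝ) ^ ((n : ℝ) * R)⌋₊)
    (Un : (n : ℕ) → Fin (M n) → Ω → ℕ)
    (hUnval : ∀ n i ω, Un n i ω ∈ Finset.Icc 1 (q ^ n))
    (hUnunif : ∀ n i, ∀ k ∈ Finset.Icc 1 (q ^ n), μ {ω | Un n i ω = k} = ((q : ℝ≥0∞) ^ n)⁻¹)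
    {U : ℕ → Ω → ℕ} (hU : ∀ n ω, U n ω = ⨅ i, Un n i ω) (G : ℕ → Ω → ℕ) {y c : ℝ}
    (hc : c < 1 - R - y)
    (hG : ∀ᶠ n : ℕ in atTop, ENNReal.ofReal ((q : ℝ) ^ ((n : ℝ) * -c)) ≤
      μ {ω | (n : ℝ)⁻¹ * Real.logb q (G n ω) < y}) :
    Tendsto (fun n : ℕ =>
        μ ({ω | G n ω < U n ω} ∩ {ω | (n : ℝ)⁻¹ * Real.logb q (min (G n ω) (U n ω) : ℝ) ≤ y}) /
          μ {ω | (n : ℝ)⁻¹ * Real.logb q (min (G n ω) (U n ω) : ℝ) ≤ y})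
      atTop (𝓝 1) := by
  have hq' : (1 : ℝ) < q := by exact_mod_cast hq
  have hM_pos : ∀ n, 0 < M n := fun n => by
    rw [hM n, Nat.floor_pos]
    exact Real.one_le_rpow hq'.le (by positivity)
  have hU_pos : ∀ n ω, 0 < U n ω := fun n ω => by
    have : Nonempty (Fin (M n)) := Fin.pos_iff_nonempty.1 (hM_pos n)
    obtain ⟨i, hi⟩ := exists_eq_ciInf_of_finite (f := fun i => Un n i ω)
    rw [hU n ω, ← hi]
    exact (Finset.mem_Icc.1 (hUnval n i ω)).1
  set B : ℕ → Set Ω := fun n => {ω | (n : ℝ)⁻¹ * Real.logb q (min (G n ω) (U n ω) : ℝ) ≤ y}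
  have hB : ∀ᶠ n : ℕ in atTop, ENNReal.ofReal ((q : ℝ) ^ ((n : ℝ) * -c)) ≤ μ (B n) :=
    hG.mono fun n hn => hn.trans <| measure_mono fun ω (hω : _ < y) => by
      refine (mul_le_mul_of_nonneg_left ?_ (inv_nonneg.2 n.cast_nonneg)).trans hω.le
      exact Real.logb_min_le_left hq' (by exact_mod_cast hU_pos n ω)
  have hwrong : ∀ᶠ n : ℕ in atTop,
      μ (B n \ {ω | G n ω < U n ω}) ≤ ENNReal.ofReal ((q : ℝ) ^ ((n : ℝ) * (R + y - 1))) := by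
    filter_upwards [eventually_gt_atTop 0] with n hn
    have : Nonempty (Fin (M n)) := Fin.pos_iff_nonempty.1 (hM_pos n)
    calc μ (B n \ {ω | G n ω < U n ω})
        ≤ μ {ω | ⨅ i, Un n i ω ≤ ⌊(q : ℝ) ^ ((n : ℝ) * y)⌋₊} :=
          measure_mono fun ω ⟨hω, hGU⟩ => by
            have hω' : (n : ℝ)⁻¹ * Real.logb q (min (G n ω) (U n ω) : ℝ) ≤ y := hω
            rw [min_eq_right (by exact_mod_cast not_lt.1 hGU)] at hω'
            show ⨅ i, Un n i ω ≤ _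
            exact hU n ω ▸ le_floor_rpow_of_logb_div_le hq' hn (hU_pos n ω) hω'
      _ ≤ Fintype.card (Fin (M n)) * (⌊(q : ℝ) ^ ((n : ℝ) * y)⌋₊ * ((q : ℝ≥0∞) ^ n)⁻¹) :=
          measure_iInf_le_le_of_measure_eq_le μ (hUnval n) (fun i k hk => (hUnunif n i k hk).le) _
      _ ≤ ENNReal.ofReal ((q : ℝ) ^ ((n : ℝ) * (R + y - 1))) := by
          rw [Fintype.card_fin]
          refine natCast_mul_floor_rpow_mul_inv_pow_le (zero_lt_one.trans hq) ?_
          rw [hM n]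
          exact Nat.floor_le (by positivity)
  refine tendsto_measure_inter_div_nhds_one μ (hB.mono fun n hn => ?_)
    (tendsto_div_nhds_zero_of_le_rpow_of_rpow_le hq' (by linarith) hwrong hB)
  exact (lt_of_lt_of_le (ENNReal.ofReal_pos.2 (Real.rpow_pos_of_pos (by positivity) _)) hn).ne'

end

theorem biInf_Iio_inter_Icc_lt_of_convex_comb {f : ℝ → EReal} {y c : ℝ}
    (hconv : ∀ t ∈ Icc (0 : ℝ) 1,
      f (t * 0 + (1 - t) * y) ≤ (t : EReal) * f 0 + ((1 - t : ℝ) : EReal) * f y)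
    (h0 : f 0 ≠ ⊤) (hy0 : 0 < y) (hy1 : y ≤ 1) (hyc : f y < c) :
    ⨅ x ∈ Iio y ∩ Icc 0 1, f x < c := by
  obtain ⟨t, hft, ht0, ht1⟩ :=
    ((EReal.eventually_lt_of_convex_comb hconv h0 hyc).and (Ioo_mem_nhdsGT zero_lt_one)).exists
  rw [mul_zero, zero_add] at hft
  have hty : 0 < t * y := mul_pos ht0 hy0
  have hx : (1 - t) * y ∈ Iio y ∩ Icc 0 1 :=
    ⟨mem_Iio.2 (by linarith), by nlinarith, by nlinarith⟩
  exact (iInf₂_le _ hx).trans_lt hft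

theorem exists_lt_sub_of_convex_comb {f : ℝ → EReal} {H r : ℝ}
    (hconv : ∀ t ∈ Icc (0 : ℝ) 1,
      f (t * H + (1 - t) * 0) ≤ (t : EReal) * f H + ((1 - t : ℝ) : EReal) * f 0)
    (hH : 0 < H) (hfH : f H ≠ ⊤) (hr : 0 < r) (h0 : f 0 < r) :
    ∃ y ∈ Ioo 0 r, f y < ((r - y : ℝ) : EReal) := by
  obtain ⟨c, h0c, hcr⟩ := EReal.lt_iff_exists_real_btwn.1 h0
  have hsmall : Tendsto (fun t => t * H) (𝓝[>] 0) (𝓝 0) :=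
    tendsto_nhdsWithin_of_tendsto_nhds (by simpa using (continuous_mul_const H).tendsto 0)
  obtain ⟨t, hft, ht0, htr, htc⟩ := ((EReal.eventually_lt_of_convex_comb hconv hfH h0c).and
    (eventually_mem_nhdsWithin.and ((hsmall.eventually (gt_mem_nhds hr)).and
      (hsmall.eventually (gt_mem_nhds (sub_pos.2 (EReal.coe_lt_coe_iff.1 hcr))))))).exists
  refine ⟨t * H, ⟨mul_pos ht0 hH, htr⟩, ?_⟩
  rw [mul_zero, add_zero] at hft
  exact hft.trans (EReal.coe_lt_coe_iff.2 (by linarith))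

theorem grand_conditional_concentration_general
    {Ω : Type*} [MeasurableSpace Ω] (μ : Measure Ω) [IsProbabilityMeasure μ]
    (q : ℕ) (hq : 2 ≤ q) (R : ℝ) (hR : R ∈ Set.Ioo (0:ℝ) 1)
    (M : ℕ → ℕ) (hM : ∀ n : ℕ, M n = ⌊(q : ℝ) ^ ((n : ℝ) * R)⌋₊)
    (Un : (n : ℕ) → Fin (M n) → Ω → ℕ)
    (hUnval : ∀ n i ω, Un n i ω ∈ Finset.Icc 1 (q ^ n))
    (hUnunif : ∀ n i, ∀ k ∈ Finset.Icc 1 (q ^ n), μ {ω | Un n i ω = k} = ((q : ℝ≥0∞) ^ n)⁻¹)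
    (U : ℕ → Ω → ℕ) (hU : ∀ n ω, U n ω = ⨅ i, Un n i ω)
    (G : ℕ → Ω → ℕ)
    (IN : ℝ → EReal) (H : ℝ) (hH : H ∈ Set.Ioo (0:ℝ) 1)
    (hINconv : ∀ x ∈ Set.Icc (0:ℝ) 1, ∀ y ∈ Set.Icc (0:ℝ) 1, ∀ a b : ℝ,
      0 ≤ a → 0 ≤ b → a + b = 1 →
      IN (a * x + b * y) ≤ (a : EReal) * IN x + (b : EReal) * IN y)
    (hINzero : ∀ x ∈ Set.Icc (0:ℝ) 1, (IN x = 0 ↔ x = H))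
    (hIN0 : IN 0 ≤ (H : EReal))
    (hLDlow : ∀ O : Set ℝ, IsOpen O →
      -(⨅ x ∈ O ∩ Set.Icc (0:ℝ) 1, IN x) ≤
        Filter.liminf
          (rateSeq q (fun n => μ {ω | (n : ℝ)⁻¹ * Real.logb q ((G n ω : ℝ)) ∈ O}))
          Filter.atTop)
    :
    (∀ y ∈ Set.Ioo (0:ℝ) (1 - R), IN y < ((1 - R - y : ℝ) : EReal) →
      Filter.Tendsto
        (fun n : ℕ =>
          μ ({ω | G n ω < U n ω} ∩
              {ω | (n : ℝ)⁻¹ * Real.logb q ((min (G n ω) (U n ω) : ℝ)) ≤ y}) /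
            μ {ω | (n : ℝ)⁻¹ * Real.logb q ((min (G n ω) (U n ω) : ℝ)) ≤ y})
        Filter.atTop (nhds (1 : ℝ≥0∞))) ∧
    (IN 0 < ((1 - R : ℝ) : EReal) →
      ∃ y ∈ Set.Ioo (0:ℝ) (1 - R), IN y < ((1 - R - y : ℝ) : EReal)) := by
  have hq' : 1 < q := by omega
  have hconv : ∀ a ∈ Icc (0 : ℝ) 1, ∀ b ∈ Icc (0 : ℝ) 1, ∀ t ∈ Icc (0 : ℝ) 1,
      IN (t * a + (1 - t) * b) ≤ (t : EReal) * IN a + ((1 - t : ℝ) : EReal) * IN b :=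
    fun a ha b hb t ht => hINconv a ha b hb t (1 - t) ht.1 (sub_nonneg.2 ht.2) (by ring)
  have hH_mem : H ∈ Icc (0 : ℝ) 1 := ⟨hH.1.le, hH.2.le⟩
  have h0_mem : (0 : ℝ) ∈ Icc (0 : ℝ) 1 := ⟨le_rfl, zero_le_one⟩
  refine ⟨fun y hy hINy => ?_, fun h0 => ?_⟩
  · obtain ⟨c, hyc, hc⟩ := EReal.lt_iff_exists_real_btwn.1 hINy
    have hy1 : y ≤ 1 := by linarith [hy.2, hR.1]
    have hlim : ((-c : ℝ) : EReal) <
        liminf (rateSeq q fun n => μ {ω | (n : ℝ)⁻¹ * Real.logb q (G n ω) ∈ Iio y}) atTop := by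
      refine lt_of_lt_of_le ?_ (hLDlow (Iio y) isOpen_Iio)
      rw [EReal.coe_neg, EReal.neg_lt_neg_iff]
      exact biInf_Iio_inter_Icc_lt_of_convex_comb (hconv 0 h0_mem y ⟨hy.1.le, hy1⟩)
        (ne_top_of_le_ne_top (EReal.coe_ne_top H) hIN0) hy.1 hy1 hyc
    exact tendsto_measure_correct_decoding_div μ hq' hR.1.le hM Un hUnval hUnunif hU G
      (EReal.coe_lt_coe_iff.1 hc) (eventually_ofReal_rpow_le_of_lt_liminf_rateSeq hq' hlim)
  · exact exists_lt_sub_of_convex_comb (hconv H hH_mem 0 h0_mem) hH.1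
      (by simp [(hINzero H hH_mem).2 rfl]) (by linarith [hR.2]) h0

/-- Concentration on correct decodings conditioned on early
termination: if `y ∈ (0, 1-R)` satisfies `I^N(y) < I^U(y) = 1 - R - y`, then
`P(Gₙ < Uⁿ | (1/n) log_q Dₙ ≤ y) → 1` where `Dₙ = min(Gₙ, Uⁿ)`; such a `y` exists
whenever `I^N(0) < 1 - R`. -/
theorem grand_conditional_concentration
    {Ω : Type*} [MeasurableSpace Ω] (μ : Measure Ω) [IsProbabilityMeasure μ]
    (q : ℕ) (hq : 2 ≤ q) (R : ℝ) (hR : R ∈ Set.Ioo (0:ℝ) 1)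
    (M : ℕ → ℕ) (hM : ∀ n : ℕ, M n = ⌊(q : ℝ) ^ ((n : ℝ) * R)⌋₊)
    (Un : (n : ℕ) → Fin (M n) → Ω → ℕ)
    (hUnmeas : ∀ n i, Measurable (Un n i))
    (hUnval : ∀ n i ω, Un n i ω ∈ Finset.Icc 1 (q ^ n))
    (hUnunif : ∀ n i, ∀ k ∈ Finset.Icc 1 (q ^ n), μ {ω | Un n i ω = k} = ((q : ℝ≥0∞) ^ n)⁻¹)
    (hUnindep : ∀ n, iIndepFun (Un n) μ)
    (U : ℕ → Ω → ℕ) (hU : ∀ n ω, U n ω = ⨅ i, Un n i ω)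
    (G : ℕ → Ω → ℕ) (hGmeas : ∀ n, Measurable (G n))
    (hGval : ∀ n ω, G n ω ∈ Finset.Icc 1 (q ^ n))
    (hGindep : ∀ n, IndepFun (G n) (fun ω i => Un n i ω) μ)
    (IN : ℝ → EReal) (H : ℝ) (hH : H ∈ Set.Ioo (0:ℝ) 1)
    (hINnn : ∀ x ∈ Set.Icc (0:ℝ) 1, 0 ≤ IN x)
    (hINconv : ∀ x ∈ Set.Icc (0:ℝ) 1, ∀ y ∈ Set.Icc (0:ℝ) 1, ∀ a b : ℝ,
      0 ≤ a → 0 ≤ b → a + b = 1 →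
      IN (a * x + b * y) ≤ (a : EReal) * IN x + (b : EReal) * IN y)
    (hINlsc : LowerSemicontinuousOn IN (Set.Icc 0 1))
    (hINcont : ContinuousOn IN {x | x ∈ Set.Icc (0:ℝ) 1 ∧ IN x ≠ ⊤})
    (hINzero : ∀ x ∈ Set.Icc (0:ℝ) 1, (IN x = 0 ↔ x = H))
    (hIN0 : IN 0 ≤ (H : EReal))
    (hLDlow : ∀ O : Set ℝ, IsOpen O →
      -(⨅ x ∈ O ∩ Set.Icc (0:ℝ) 1, IN x) ≤
        Filter.liminf
          (rateSeq q (fun n => μ {ω | (n : ℝ)⁻¹ * Real.logb q ((G n ω : ℝ)) ∈ O}))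
          Filter.atTop)
    (hLDup : ∀ F : Set ℝ, IsClosed F →
      Filter.limsup
          (rateSeq q (fun n => μ {ω | (n : ℝ)⁻¹ * Real.logb q ((G n ω : ℝ)) ∈ F}))
          Filter.atTop ≤
        -(⨅ x ∈ F ∩ Set.Icc (0:ℝ) 1, IN x))
    :
    (∀ y ∈ Set.Ioo (0:ℝ) (1 - R), IN y < ((1 - R - y : ℝ) : EReal) →
      Filter.Tendsto
        (fun n : ℕ =>
          μ ({ω | G n ω < U n ω} ∩
              {ω | (n : ℝ)⁻¹ * Real.logb q ((min (G n ω) (U n ω) : ℝ)) ≤ y}) /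
            μ {ω | (n : ℝ)⁻¹ * Real.logb q ((min (G n ω) (U n ω) : ℝ)) ≤ y})
        Filter.atTop (nhds (1 : ℝ≥0∞))) ∧
    (IN 0 < ((1 - R : ℝ) : EReal) →
      ∃ y ∈ Set.Ioo (0:ℝ) (1 - R), IN y < ((1 - R - y : ℝ) : EReal)) :=
  grand_conditional_concentration_general μ q hq R hR M hM Un hUnval hUnunif U hU G IN H hH hINconv
    hINzero hIN0 hLDlow
end

section
/- (Guesswork moment exponents for i.i.d. Bernoulli noise.) Let p ∈ (0,1), and for each n let N^n be a random vector in {0,1}^n whose coordinates are i.i.d. Bernoulli(p), so P(N^n = z) = p^{w(z)} (1−p)^{n−w(z)} where w(z) is the Hamming weight of z. Let G_n : {0,1}^n → {1, …, 2^n} be any bijection satisfying G_n(z) ≤ G_n(z′) whenever P(N^n = z) ≥ P(N^n = z′). Then for every α ∈ (−1, ∞), lim_{n→∞} (1/n) log₂ E[G_n(N^n)^α] = (1+α) log₂( (1−p)^{1/(1+α)} + p^{1/(1+α)} ), and for every α ≤ −1, lim_{n→∞} (1/n) log₂ E[G_n(N^n)^α] = log₂( max(1−p, p) ). -/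
open Filter Set Topology

/-- The Hamming weight of a binary string `z ∈ {0,1}ⁿ`. -/
def hammingWeight {n : ℕ} (z : Fin n → Bool) : ℕ :=
  (Finset.univ.filter fun i => z i = true).card

/-- The Bernoulli(p) i.i.d. probability of the string `z ∈ {0,1}ⁿ`:
`P(Nⁿ = z) = p^{w(z)} (1-p)^{n-w(z)}`. -/
noncomputable def bernoulliMass (p : ℝ) {n : ℕ} (z : Fin n → Bool) : ℝ :=
  p ^ hammingWeight z * (1 - p) ^ (n - hammingWeight z)

/-!
Write `s = (1 + α)⁻¹` and `S = ∑_z P(z)^s`, which for Bernoulli noise is `((1-p)^s + p^s)^n`.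
All strings guessed no later than `z` are at least as likely as `z`, so `G(z) P(z)^s ≤ S`;
summing `P(z) G(z)^α = P(z)^s (G(z) P(z)^s)^α` gives `E[G^α] ≤ S^(1+α)` for `α ≥ 0` and the
reverse inequality for `-1 < α ≤ 0`. Hölder's inequality with weights `1/G(z)` gives the opposite
bounds up to a factor `(∑_z 1/G(z))^|α|`, and `∑_z 1/G(z)` is the harmonic number
`H_(2^n) ≤ n + 1`, which is invisible at exponential scale. For `α ≤ -1` the moment lies between
the mass `max(1-p, p)^n` of the first guess and `max(1-p, p)^n H_(2^n)`.
-/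

lemma mul_rpow_eq_rpow_inv_mul_mul_rpow {x y α : ℝ} (hx : 0 ≤ x) (hy : 0 ≤ y)
    (hα : 1 + α ≠ 0) : x * y ^ α = x ^ (1 + α)⁻¹ * (y * x ^ (1 + α)⁻¹) ^ α := by
  have hexp : (1 + α)⁻¹ + (1 + α)⁻¹ * α = 1 := by field_simp
  rw [Real.mul_rpow hy (Real.rpow_nonneg hx _), ← Real.rpow_mul hx, mul_left_comm,
    ← Real.rpow_add' hx (by rw [hexp]; exact one_ne_zero), hexp, Real.rpow_one, mul_comm]

section Guesswork

variable {ι : Type*} [Fintype ι]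

structure IsRanking (G : ι → ℕ) : Prop where
  mem_Icc : ∀ z, G z ∈ Finset.Icc 1 (Fintype.card ι)
  injective : Function.Injective G

structure IsGuessworkOrder (P : ι → ℝ) (G : ι → ℕ) : Prop extends IsRanking G where
  mass_le_of_le : ∀ z z', G z ≤ G z' → P z' ≤ P z

noncomputable def guessworkMoment (P : ι → ℝ) (G : ι → ℕ) (α : ℝ) : ℝ :=
  ∑ z, P z * (G z : ℝ) ^ α

variable {P : ι → ℝ} {G : ι → ℕ} {α : ℝ}

namespace IsRanking

lemma pos (hG : IsRanking G) (z : ι) : 0 < G z :=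
  (Finset.mem_Icc.mp (hG.mem_Icc z)).1

lemma image_univ (hG : IsRanking G) : Finset.univ.image G = Finset.Icc 1 (Fintype.card ι) :=
  Finset.eq_of_subset_of_card_le (Finset.image_subset_iff.mpr fun z _ => hG.mem_Icc z)
    (by simp [Finset.card_image_of_injective _ hG.injective])

lemma exists_eq_one [Nonempty ι] (hG : IsRanking G) : ∃ z, G z = 1 := by
  have : 1 ∈ Finset.univ.image G := by
    rw [hG.image_univ]
    exact Finset.mem_Icc.mpr ⟨le_rfl, Fintype.card_pos⟩
  simpa using this

lemma card_filter_le (hG : IsRanking G) (z : ι) :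
    (Finset.univ.filter fun z' => G z' ≤ G z).card = G z := by
  have himage : (Finset.univ.image G).filter (· ≤ G z) = Finset.Icc 1 (G z) := by
    have hz := (Finset.mem_Icc.mp (hG.mem_Icc z)).2
    ext k
    simp only [hG.image_univ, Finset.mem_filter, Finset.mem_Icc]
    omega
  rw [Finset.filter_image] at himage
  rw [← Finset.card_image_of_injective _ hG.injective, himage, Nat.card_Icc, Nat.add_sub_cancel]

lemma sum_inv_eq_harmonic (hG : IsRanking G) :
    ∑ z, (G z : ℝ)⁻¹ = harmonic (Fintype.card ι) := by
  rw [harmonic_eq_sum_Icc, ← hG.image_univ, Finset.sum_image fun _ _ _ _ h => hG.injective h]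
  push_cast
  rfl

end IsRanking

namespace IsGuessworkOrder

lemma natCast_mul_rpow_le_sum_rpow (hG : IsGuessworkOrder P G) (hP : ∀ z, 0 ≤ P z) {s : ℝ}
    (hs : 0 ≤ s) (z : ι) : (G z : ℝ) * P z ^ s ≤ ∑ z', P z' ^ s := by
  let earlier := Finset.univ.filter fun z' => G z' ≤ G z
  calc (G z : ℝ) * P z ^ s = ∑ _z' ∈ earlier, P z ^ s := by
        rw [Finset.sum_const, nsmul_eq_mul, hG.card_filter_le]
    _ ≤ ∑ z' ∈ earlier, P z' ^ s := Finset.sum_le_sum fun z' hz' =>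
        Real.rpow_le_rpow (hP z) (hG.mass_le_of_le z' z (Finset.mem_filter.mp hz').2) hs
    _ ≤ ∑ z', P z' ^ s := Finset.sum_le_sum_of_subset_of_nonneg (Finset.subset_univ _)
        fun z' _ _ => Real.rpow_nonneg (hP z') s

lemma guessworkMoment_le_rpow (hG : IsGuessworkOrder P G) (hP : ∀ z, 0 ≤ P z) (hα : 0 ≤ α) :
    guessworkMoment P G α ≤ (∑ z, P z ^ (1 + α)⁻¹) ^ (1 + α) := by
  set s := (1 + α)⁻¹
  set S := ∑ z, P z ^ s
  calc guessworkMoment P G α = ∑ z, P z ^ s * ((G z : ℝ) * P z ^ s) ^ α :=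
        Finset.sum_congr rfl fun z _ =>
          mul_rpow_eq_rpow_inv_mul_mul_rpow (hP z) (Nat.cast_nonneg _) (by linarith)
    _ ≤ ∑ z, P z ^ s * S ^ α := Finset.sum_le_sum fun z _ =>
        mul_le_mul_of_nonneg_left (Real.rpow_le_rpow
          (mul_nonneg (Nat.cast_nonneg _) (Real.rpow_nonneg (hP z) s))
          (hG.natCast_mul_rpow_le_sum_rpow hP (inv_nonneg.mpr (by linarith)) z) hα)
          (Real.rpow_nonneg (hP z) s)
    _ = S ^ (1 + α) := by
        rw [← Finset.sum_mul, Real.rpow_one_add' (Finset.sum_nonneg fun z _ =>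
          Real.rpow_nonneg (hP z) s) (by linarith)]

lemma rpow_le_guessworkMoment (hG : IsGuessworkOrder P G) (hP : ∀ z, 0 < P z) (hα : -1 < α)
    (hα0 : α ≤ 0) : (∑ z, P z ^ (1 + α)⁻¹) ^ (1 + α) ≤ guessworkMoment P G α := by
  set s := (1 + α)⁻¹
  set S := ∑ z, P z ^ s
  calc S ^ (1 + α) = ∑ z, P z ^ s * S ^ α := by
        rw [← Finset.sum_mul, Real.rpow_one_add' (Finset.sum_nonneg fun z _ =>
          Real.rpow_nonneg (hP z).le s) (by linarith)]
    _ ≤ ∑ z, P z ^ s * ((G z : ℝ) * P z ^ s) ^ α := Finset.sum_le_sum fun z _ =>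
        mul_le_mul_of_nonneg_left (Real.rpow_le_rpow_of_nonpos
          (mul_pos (Nat.cast_pos.mpr (hG.pos z)) (Real.rpow_pos_of_pos (hP z) s))
          (hG.natCast_mul_rpow_le_sum_rpow (fun z => (hP z).le) (inv_nonneg.mpr (by linarith)) z)
          hα0) (Real.rpow_nonneg (hP z).le s)
    _ = guessworkMoment P G α :=
        Finset.sum_congr rfl fun z _ =>
          (mul_rpow_eq_rpow_inv_mul_mul_rpow (hP z).le (Nat.cast_nonneg _)
            (by linarith)).symm

lemma mass_le_guessworkMoment (hG : IsGuessworkOrder P G) (hP : ∀ z, 0 ≤ P z) (z : ι) :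
    P z ≤ guessworkMoment P G α := by
  have : Nonempty ι := ⟨z⟩
  obtain ⟨z₁, hz₁⟩ := hG.exists_eq_one
  calc P z ≤ P z₁ * (G z₁ : ℝ) ^ α := by
        rw [hz₁, Nat.cast_one, Real.one_rpow, mul_one]
        exact hG.mass_le_of_le z₁ z (hz₁ ▸ hG.pos z)
    _ ≤ guessworkMoment P G α :=
        Finset.single_le_sum (f := fun z => P z * (G z : ℝ) ^ α)
          (fun z _ => mul_nonneg (hP z) (Real.rpow_nonneg (Nat.cast_nonneg _) α))
          (Finset.mem_univ z₁)

end IsGuessworkOrder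

lemma rpow_le_sum_inv_rpow_mul_guessworkMoment (hP : ∀ z, 0 ≤ P z) (hG : ∀ z, 0 < G z)
    (hα : 0 ≤ α) :
    (∑ z, P z ^ (1 + α)⁻¹) ^ (1 + α) ≤ (∑ z, (G z : ℝ)⁻¹) ^ α * guessworkMoment P G α := by
  have hG' (z : ι) : (0 : ℝ) < G z := Nat.cast_pos.mpr (hG z)
  have hα' : 1 + α ≠ 0 := by positivity
  have hölder := Real.inner_le_weight_mul_Lp_of_nonneg Finset.univ (p := 1 + α) (by linarith)
    (fun z => (G z : ℝ)⁻¹) (fun z => P z ^ (1 + α)⁻¹ * G z) (fun z => (inv_pos.mpr (hG' z)).le)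
    (fun z => mul_nonneg (Real.rpow_nonneg (hP z) _) (hG' z).le)
  have hwf (z : ι) : (G z : ℝ)⁻¹ * (P z ^ (1 + α)⁻¹ * G z) = P z ^ (1 + α)⁻¹ := by
    field_simp [(hG' z).ne']
  have hwfq (z : ι) : (G z : ℝ)⁻¹ * (P z ^ (1 + α)⁻¹ * G z) ^ (1 + α) = P z * (G z : ℝ) ^ α := by
    rw [Real.mul_rpow (Real.rpow_nonneg (hP z) _) (hG' z).le, Real.rpow_inv_rpow (hP z) hα',
      Real.rpow_one_add' (hG' z).le hα']
    field_simp [(hG' z).ne']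
  simp only [hwf, hwfq] at hölder
  have hH : 0 ≤ ∑ z, (G z : ℝ)⁻¹ := Finset.sum_nonneg fun z _ => (inv_pos.mpr (hG' z)).le
  have hE : 0 ≤ guessworkMoment P G α := Finset.sum_nonneg fun z _ =>
    mul_nonneg (hP z) (Real.rpow_nonneg (hG' z).le α)
  calc (∑ z, P z ^ (1 + α)⁻¹) ^ (1 + α)
      ≤ ((∑ z, (G z : ℝ)⁻¹) ^ (1 - (1 + α)⁻¹) * guessworkMoment P G α ^ (1 + α)⁻¹) ^ (1 + α) :=
        Real.rpow_le_rpow (Finset.sum_nonneg fun z _ => Real.rpow_nonneg (hP z) _) hölder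
          (by linarith)
    _ = (∑ z, (G z : ℝ)⁻¹) ^ α * guessworkMoment P G α := by
        rw [Real.mul_rpow (Real.rpow_nonneg hH _) (Real.rpow_nonneg hE _), ← Real.rpow_mul hH,
          Real.rpow_inv_rpow hE hα']
        congr 2
        field_simp
        ring

lemma guessworkMoment_le_sum_inv_rpow_mul_rpow (hP : ∀ z, 0 ≤ P z) (hG : ∀ z, 0 < G z)
    (hα : -1 < α) (hα0 : α ≤ 0) :
    guessworkMoment P G α ≤ (∑ z, (G z : ℝ)⁻¹) ^ (-α) * (∑ z, P z ^ (1 + α)⁻¹) ^ (1 + α) := by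
  have hG' (z : ι) : (0 : ℝ) < G z := Nat.cast_pos.mpr (hG z)
  have hα' : 1 + α ≠ 0 := by linarith
  have hölder := Real.inner_le_weight_mul_Lp_of_nonneg Finset.univ (p := (1 + α)⁻¹)
    (one_le_inv₀ (by linarith) |>.mpr (by linarith))
    (fun z => (G z : ℝ)⁻¹) (fun z => P z * (G z : ℝ) ^ (1 + α))
    (fun z => (inv_pos.mpr (hG' z)).le)
    (fun z => mul_nonneg (hP z) (Real.rpow_nonneg (hG' z).le _))
  have hwf (z : ι) : (G z : ℝ)⁻¹ * (P z * (G z : ℝ) ^ (1 + α)) = P z * (G z : ℝ) ^ α := by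
    rw [Real.rpow_one_add' (hG' z).le hα']
    field_simp [(hG' z).ne']
  have hwfq (z : ι) :
      (G z : ℝ)⁻¹ * (P z * (G z : ℝ) ^ (1 + α)) ^ (1 + α)⁻¹ = P z ^ (1 + α)⁻¹ := by
    rw [Real.mul_rpow (hP z) (Real.rpow_nonneg (hG' z).le _), Real.rpow_rpow_inv (hG' z).le hα']
    field_simp [(hG' z).ne']
  simp only [hwf, hwfq, inv_inv] at hölder
  rwa [show 1 - (1 + α) = -α by ring] at hölder

lemma guessworkMoment_le_mul_sum_inv {m : ℝ} (hP : ∀ z, 0 ≤ P z) (hPm : ∀ z, P z ≤ m)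
    (hG : ∀ z, 0 < G z) (hα : α ≤ -1) : guessworkMoment P G α ≤ m * ∑ z, (G z : ℝ)⁻¹ := by
  rw [Finset.mul_sum]
  refine Finset.sum_le_sum fun z _ => mul_le_mul (hPm z) ?_ (by positivity)
    ((hP z).trans (hPm z))
  rw [← Real.rpow_neg_one]
  exact Real.rpow_le_rpow_of_exponent_le (Nat.one_le_cast.mpr (hG z)) hα

lemma IsGuessworkOrder.guessworkMoment_mem_Icc {h : ℝ} (hG : IsGuessworkOrder P G)
    (hP : ∀ z, 0 < P z) (hα : -1 < α) (hH : ∑ z, (G z : ℝ)⁻¹ ≤ h) (h1 : 1 ≤ h) :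
    guessworkMoment P G α ∈ Set.Icc ((∑ z, P z ^ (1 + α)⁻¹) ^ (1 + α) / h ^ |α|)
      ((∑ z, P z ^ (1 + α)⁻¹) ^ (1 + α) * h ^ |α|) := by
  have hP' (z : ι) : 0 ≤ P z := (hP z).le
  have hS : 0 ≤ (∑ z, P z ^ (1 + α)⁻¹) ^ (1 + α) :=
    Real.rpow_nonneg (Finset.sum_nonneg fun z _ => Real.rpow_nonneg (hP' z) _) _
  have hH0 : 0 ≤ ∑ z, (G z : ℝ)⁻¹ := Finset.sum_nonneg fun z _ => by positivity
  rcases le_total α 0 with hα0 | hα0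
  · rw [abs_of_nonpos hα0]
    refine ⟨(div_le_self hS (Real.one_le_rpow h1 (by linarith))).trans
      (hG.rpow_le_guessworkMoment hP hα hα0), ?_⟩
    calc guessworkMoment P G α
        ≤ (∑ z, (G z : ℝ)⁻¹) ^ (-α) * (∑ z, P z ^ (1 + α)⁻¹) ^ (1 + α) :=
          guessworkMoment_le_sum_inv_rpow_mul_rpow hP' hG.pos hα hα0
      _ ≤ h ^ (-α) * (∑ z, P z ^ (1 + α)⁻¹) ^ (1 + α) := by
          gcongr
          linarith
      _ = _ := mul_comm _ _
  · rw [abs_of_nonneg hα0]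
    refine ⟨?_, (hG.guessworkMoment_le_rpow hP' hα0).trans
      (le_mul_of_one_le_right hS (Real.one_le_rpow h1 hα0))⟩
    rw [div_le_iff₀ (by positivity), mul_comm]
    calc (∑ z, P z ^ (1 + α)⁻¹) ^ (1 + α)
        ≤ (∑ z, (G z : ℝ)⁻¹) ^ α * guessworkMoment P G α :=
          rpow_le_sum_inv_rpow_mul_guessworkMoment hP' hG.pos hα0
      _ ≤ h ^ α * guessworkMoment P G α := by
          gcongr
          exact Finset.sum_nonneg fun z _ => mul_nonneg (hP' z) (by positivity)

end Guesswork

lemma bernoulliMass_eq_prod (p : ℝ) {n : ℕ} (z : Fin n → Bool) :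
    bernoulliMass p z = ∏ i, if z i then p else 1 - p := by
  rw [Finset.prod_ite, Finset.prod_const, Finset.prod_const, Finset.filter_not,
    Finset.card_sdiff_of_subset (Finset.filter_subset _ _)]
  simp [bernoulliMass, hammingWeight]

section Bernoulli

variable {p : ℝ} {n : ℕ}

lemma bernoulliMass_pos (hp0 : 0 < p) (hp1 : p < 1) (z : Fin n → Bool) : 0 < bernoulliMass p z :=
  mul_pos (pow_pos hp0 _) (pow_pos (sub_pos.mpr hp1) _)

lemma sum_bernoulliMass_rpow (hp0 : 0 ≤ p) (hp1 : p ≤ 1) (s : ℝ) :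
    ∑ z : Fin n → Bool, bernoulliMass p z ^ s = ((1 - p) ^ s + p ^ s) ^ n := by
  have hprod (z : Fin n → Bool) :
      bernoulliMass p z ^ s = ∏ i, if z i then p ^ s else (1 - p) ^ s := by
    rw [bernoulliMass_eq_prod,
      ← Real.finsetProd_rpow _ _ fun i _ => by split_ifs <;> linarith]
    exact Finset.prod_congr rfl fun i _ => by split_ifs <;> rfl
  simp_rw [hprod]
  rw [← Fintype.sum_pow (fun b : Bool => if b then p ^ s else (1 - p) ^ s), Fintype.sum_bool]
  simp [add_comm]

lemma bernoulliMass_le_max_pow (hp0 : 0 ≤ p) (hp1 : p ≤ 1) (z : Fin n → Bool) :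
    bernoulliMass p z ≤ max (1 - p) p ^ n := by
  rw [bernoulliMass_eq_prod]
  calc ∏ i, (if z i then p else 1 - p) ≤ ∏ _i : Fin n, max (1 - p) p :=
        Finset.prod_le_prod (fun i _ => by split_ifs <;> linarith)
          fun i _ => by split_ifs; exacts [le_max_right _ _, le_max_left _ _]
    _ = max (1 - p) p ^ n := by simp

lemma exists_bernoulliMass_eq_max_pow (p : ℝ) (n : ℕ) :
    ∃ z : Fin n → Bool, bernoulliMass p z = max (1 - p) p ^ n := by
  refine ⟨fun _ => decide (1 - p ≤ p), ?_⟩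
  by_cases h : 1 - p ≤ p
  · simp [bernoulliMass_eq_prod, h]
  · simp [bernoulliMass_eq_prod, h, (not_le.mp h).le]

end Bernoulli

lemma harmonic_two_pow_le (n : ℕ) : (harmonic (2 ^ n) : ℝ) ≤ n + 1 := by
  calc (harmonic (2 ^ n) : ℝ) ≤ 1 + Real.log (2 ^ n) := by
        exact_mod_cast harmonic_le_one_add_log (2 ^ n)
    _ = 1 + n * Real.log 2 := by rw [Real.log_pow]
    _ ≤ n + 1 := by
        have := Real.log_two_lt_d9
        nlinarith [(Nat.cast_nonneg n : (0 : ℝ) ≤ n)]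

lemma tendsto_inv_mul_logb_of_le_of_le {c b K : ℝ} {E : ℕ → ℝ} (hc : 1 < c) (hb : 0 < b)
    (hlow : ∀ n : ℕ, b ^ n / ((n : ℝ) + 1) ^ K ≤ E n)
    (hup : ∀ n : ℕ, E n ≤ b ^ n * ((n : ℝ) + 1) ^ K) :
    Tendsto (fun n : ℕ => (n : ℝ)⁻¹ * Real.logb c (E n)) atTop (𝓝 (Real.logb c b)) := by
  set ε : ℕ → ℝ := fun n => K * Real.logb c ((n : ℝ) + 1) / n
  have hε : Tendsto ε atTop (𝓝 0) := by
    have hshift : Tendsto (fun n : ℕ => (n : ℝ) + 1) atTop atTop :=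
      tendsto_atTop_add_const_right _ _ tendsto_natCast_atTop_atTop
    have := ((Real.tendsto_pow_log_div_mul_add_atTop 1 (-1) 1 one_ne_zero).comp hshift).const_mul
      (K / Real.log c)
    rw [mul_zero] at this
    refine this.congr fun n => ?_
    simp only [ε, Function.comp_apply, pow_one, one_mul, add_neg_cancel_right, Real.logb]
    ring
  have hlog (n : ℕ) (x : ℝ) : Real.logb c (b ^ n * ((n : ℝ) + 1) ^ x)
      = n * Real.logb c b + x * Real.logb c ((n : ℝ) + 1) := by
    rw [Real.logb_mul (by positivity) (by positivity), Real.logb_pow,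
      Real.logb_rpow_eq_mul_logb_of_pos (by positivity)]
  have hE (n : ℕ) : 0 < E n := lt_of_lt_of_le (by positivity) (hlow n)
  refine tendsto_of_tendsto_of_tendsto_of_le_of_le' (by simpa using tendsto_const_nhds.sub hε)
    (by simpa using tendsto_const_nhds.add hε) ?_ ?_ <;>
    filter_upwards [eventually_gt_atTop 0] with n hn <;>
    have hn' : (0 : ℝ) < n := Nat.cast_pos.mpr hn
  all_goals
    simp only [ε]
    rw [div_eq_inv_mul, show Real.logb c b = (n : ℝ)⁻¹ * (n * Real.logb c b) by field_simp]
  · have h := Real.logb_le_logb_of_le hc (by positivity) (hlow n)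
    rw [div_eq_mul_inv, ← Real.rpow_neg (by positivity), hlog] at h
    rw [← mul_sub]
    exact mul_le_mul_of_nonneg_left (by linarith) (inv_nonneg.mpr hn'.le)
  · have h := Real.logb_le_logb_of_le hc (hE n) (hup n)
    rw [hlog] at h
    rw [← mul_add]
    exact mul_le_mul_of_nonneg_left h (inv_nonneg.mpr hn'.le)

/-- Guesswork moment exponents for i.i.d. Bernoulli(p) noise:
for any guesswork order `Gₙ`, for `α ∈ (-1, ∞)`,
`(1/n) log₂ E[Gₙ(Nⁿ)^α] → (1+α) log₂((1-p)^{1/(1+α)} + p^{1/(1+α)})`,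
and for `α ≤ -1` the limit is `log₂(max(1-p, p))`. -/
theorem guesswork_moment_exponents_bernoulli
    (p : ℝ) (hp : p ∈ Set.Ioo (0:ℝ) 1)
    (Gn : (n : ℕ) → (Fin n → Bool) → ℕ)
    (hval : ∀ n z, Gn n z ∈ Finset.Icc 1 (2 ^ n))
    (hinj : ∀ n, Function.Injective (Gn n))
    (hord : ∀ n, ∀ z z' : Fin n → Bool, Gn n z ≤ Gn n z' →
      bernoulliMass p z' ≤ bernoulliMass p z) :
    (∀ α : ℝ, -1 < α →
      Filter.Tendsto
        (fun n : ℕ =>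
          (n : ℝ)⁻¹ *
            Real.logb 2 (∑ z : Fin n → Bool, bernoulliMass p z * (Gn n z : ℝ) ^ α))
        Filter.atTop
        (nhds ((1 + α) * Real.logb 2 ((1 - p) ^ (1 + α)⁻¹ + p ^ (1 + α)⁻¹)))) ∧
    (∀ α : ℝ, α ≤ -1 →
      Filter.Tendsto
        (fun n : ℕ =>
          (n : ℝ)⁻¹ *
            Real.logb 2 (∑ z : Fin n → Bool, bernoulliMass p z * (Gn n z : ℝ) ^ α))
        Filter.atTop
        (nhds (Real.logb 2 (max (1 - p) p)))) := by
  obtain ⟨hp0, hp1⟩ := hp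
  have hP (n : ℕ) (z : Fin n → Bool) : 0 < bernoulliMass p z := bernoulliMass_pos hp0 hp1 z
  have hGn (n : ℕ) : IsGuessworkOrder (bernoulliMass p) (Gn n) :=
    ⟨⟨fun z => by simpa using hval n z, hinj n⟩, hord n⟩
  have hH (n : ℕ) : ∑ z, (Gn n z : ℝ)⁻¹ ≤ n + 1 := by
    simpa [(hGn n).sum_inv_eq_harmonic] using harmonic_two_pow_le n
  have hn1 (n : ℕ) : (1 : ℝ) ≤ n + 1 := by linarith [n.cast_nonneg (α := ℝ)]
  refine ⟨fun α hα => ?_, fun α hα => ?_⟩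
  · have hB : 0 < (1 - p) ^ (1 + α)⁻¹ + p ^ (1 + α)⁻¹ := by
      have := sub_pos.mpr hp1
      positivity
    have hbounds (n : ℕ) := (hGn n).guessworkMoment_mem_Icc (hP n) hα (hH n) (hn1 n)
    simp only [sum_bernoulliMass_rpow hp0.le hp1.le, ← Real.rpow_pow_comm hB.le] at hbounds
    rw [← Real.logb_rpow_eq_mul_logb_of_pos hB]
    exact tendsto_inv_mul_logb_of_le_of_le one_lt_two (by positivity)
      (fun n => (hbounds n).1) (fun n => (hbounds n).2)
  · have hM : 0 < max (1 - p) p := lt_max_of_lt_right hp0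
    refine tendsto_inv_mul_logb_of_le_of_le (K := 1) one_lt_two hM (fun n => ?_) (fun n => ?_)
    · obtain ⟨z, hz⟩ := exists_bernoulliMass_eq_max_pow p n
      calc max (1 - p) p ^ n / ((n : ℝ) + 1) ^ (1 : ℝ) ≤ bernoulliMass p z := by
            rw [hz, Real.rpow_one]
            exact div_le_self (by positivity) (hn1 n)
        _ ≤ _ := (hGn n).mass_le_guessworkMoment (fun z => (hP n z).le) z
    · rw [Real.rpow_one]
      exact (guessworkMoment_le_mul_sum_inv (fun z => (hP n z).le)
        (bernoulliMass_le_max_pow hp0.le hp1.le) (hGn n).pos hα).trans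
        (mul_le_mul_of_nonneg_left (hH n) (by positivity))
end
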